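/- arXiv:math/0703668 — 8 statements merged into one kernel-verified Lean document; each statement's English description precedes it below -/
import Mathlib

section
/- Let K ≥ 1 and c ≥ 1 be real numbers. Suppose that for every m ≥ 1 and every nonempty shift-minimal downset B ⊆ F_2^m with |B + B| ≤ K·|B| there exists an affine subspace of F_2^m of cardinality at most c·|B| containing B. Then for every n ≥ 1 and every nonempty set A ⊆ F_2^n with |A + A| ≤ K·|A| there exists an affine subspace of F_2^n of cardinality at most c·|A| containing A. -/
/-!
Translate `A` so that it contains `0`, and apply a linear automorphism sending
`d = dim span A` independent elements of `A` to `e_1, …, e_d`; this changes neither `|A|` nor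
`|A + A|`. Then compress: for `v = e_j`, or `v = e_i + e_j` with `i < j`, move each `x` with
`x_j = 1` to `x + v` unless that point is already taken. Such a compression preserves `|A|`,
does not increase `|A + A|`, keeps `0, e_1, …, e_d`, and strictly decreases the total binary
weight `∑_{x ∈ A} ∑_k x_k 2^k` unless it fixes `A`. A set of minimal weight is therefore a
shift-minimal downset `B` containing `0, e_1, …, e_d`. An affine subspace containing `B` is a
linear subspace of dimension at least `d`, hence at least as large as `a + span (A - a) ⊇ A`.
-/

open Finset Pointwise

abbrev F2 (n : ℕ) := Fin n → ZMod 2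

/-- The standard basis vector `e i` of `F_2^n`. -/
def stdBasis {n : ℕ} (i : Fin n) : F2 n := Pi.single i 1

/-- `A` is a downset: whenever `x i = 0` and `x + e i ∈ A`, also `x ∈ A`. -/
def IsDownset {n : ℕ} (A : Finset (F2 n)) : Prop :=
  ∀ x : F2 n, ∀ i : Fin n, x i = 0 → x + stdBasis i ∈ A → x ∈ A

/-- `A` is shift-minimal: whenever `i < j`, `x i = x j = 0` and `x + e j ∈ A`,
also `x + e i ∈ A`. -/
def IsShiftMinimal {n : ℕ} (A : Finset (F2 n)) : Prop :=
  ∀ x : F2 n, ∀ i j : Fin n, i < j → x i = 0 → x j = 0 →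
    x + stdBasis j ∈ A → x + stdBasis i ∈ A

/-- The Hamming ball of radius `r` in `F_2^n`. -/
def hamBall (n r : ℕ) : Finset (F2 n) := Finset.univ.filter fun x => hammingNorm x ≤ r

open Module Submodule

lemma ZMod.eq_zero_or_eq_one_of_two (a : ZMod 2) : a = 0 ∨ a = 1 := by
  revert a; decide

section LinearAlgebra

variable {K V : Type*} [DivisionRing K] [AddCommGroup V] [Module K V] [FiniteDimensional K V]

theorem Module.exists_basis_fin_apply_mem_of_lt_finrank_span {n : ℕ} (hn : finrank K V = n)
    (s : Set V) :
    ∃ b : Basis (Fin n) K V, ∀ k : Fin n, (k : ℕ) < finrank K (span K s) → b k ∈ s := by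
  classical
  obtain ⟨t, hts, hspan, hli⟩ := exists_linearIndependent K s
  let b := Basis.sumExtend hli
  have := hli.finite
  have := (b.linearIndependent.comp _ Sum.inr_injective).finite
  have : Fintype t := .ofFinite _
  have : Fintype (Basis.sumExtendIndex hli) := .ofFinite _
  have hb : ∀ x : t, b (.inl x) = x := fun x => by
    simp only [b, Basis.sumExtend, Basis.coe_reindex, Basis.coe_extend, Function.comp_apply]
    rfl
  have hcard : Fintype.card t + Fintype.card (Basis.sumExtendIndex hli) = n := by
    rw [← Fintype.card_sum, ← hn, finrank_eq_card_basis b]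
  have ht : finrank K (span K s) = Fintype.card t := by
    rw [← hspan, ← finrank_span_eq_card hli, Subtype.range_coe]
  let e := (Equiv.sumCongr (Fintype.equivFin t) (Fintype.equivFin _)).trans
    (finSumFinEquiv.trans (finCongr hcard))
  refine ⟨b.reindex e, fun k hk => ?_⟩
  rw [Basis.reindex_apply]
  rcases h : e.symm k with x | y
  · rw [hb]
    exact hts x.2
  · have hk_eq : k = e (.inr y) := by rw [← h, Equiv.apply_symm_apply]
    have hk_ge : Fintype.card t ≤ k := by simp [hk_eq, e]
    omega

theorem Module.le_finrank_of_basis_apply_mem {n d : ℕ} (b : Basis (Fin n) K V) (hd : d ≤ n)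
    {W : Submodule K V} (hW : ∀ k : Fin n, (k : ℕ) < d → b k ∈ W) : d ≤ finrank K W := by
  have hli : LinearIndependent K fun k : Fin d => (⟨b (Fin.castLE hd k), hW _ k.isLt⟩ : W) :=
    .of_comp W.subtype (b.linearIndependent.comp _ (Fin.castLE_injective hd))
  simpa using hli.fintype_card_le_finrank

theorem Submodule.natCard_le_natCard_of_finrank_le [Finite K] {U W : Submodule K V}
    (h : finrank K U ≤ finrank K W) : Nat.card U ≤ Nat.card W := by
  rw [natCard_eq_pow_finrank (K := K) (V := U), natCard_eq_pow_finrank (K := K) (V := W)]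
  exact Nat.pow_le_pow_right Nat.card_pos h

end LinearAlgebra

lemma Submodule.mem_of_mem_vadd_of_zero_mem {R G : Type*} [Ring R] [AddCommGroup G] [Module R G]
    {W : Submodule R G} {t x : G} (h0 : 0 ∈ t +ᵥ (W : Set G)) (hx : x ∈ t +ᵥ (W : Set G)) :
    x ∈ W := by
  rw [mem_leftAddCoset_iff] at h0 hx
  simpa using W.sub_mem hx h0

section ElementaryAbelian

variable {G : Type*} [AddCommGroup G] [Module (ZMod 2) G] [DecidableEq G]

lemma image_add_right_add_self (A : Finset G) (a : G) :
    A.image (· + a) + A.image (· + a) = A + A := by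
  ext z
  simp only [mem_add, mem_image, exists_exists_and_eq_and, add_add_add_comm _ a,
    ZModModule.add_self, add_zero]

lemma coe_subset_vadd_span_image_add (A : Finset G) (a : G) :
    (A : Set G) ⊆ a +ᵥ (span (ZMod 2) (A.image (· + a) : Set G) : Set G) := by
  intro x hx
  rw [mem_leftAddCoset_iff, ZModModule.neg_eq_self, add_comm]
  exact subset_span (mem_image_of_mem (· + a) hx)

end ElementaryAbelian

section Compression

variable {G : Type*} [AddCommGroup G] [DecidableEq G] {φ : G →+ ZMod 2} {v : G} {A B : Finset G}

variable (φ v) in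
def compressionMap (A : Finset G) (x : G) : G :=
  if φ x = 1 ∧ x + v ∉ A then x + v else x

variable (φ v) in
def compression (A : Finset G) : Finset G :=
  A.image (compressionMap φ v A)

lemma injOn_compressionMap : Set.InjOn (compressionMap φ v A) A := by
  intro x hx y hy hxy
  simp only [compressionMap] at hxy
  split_ifs at hxy with hx_move hy_move hy_move
  · simpa using hxy
  · exact absurd (hxy ▸ hy) hx_move.2
  · exact absurd (hxy ▸ hx) hy_move.2
  · exact hxy

lemma card_compression : #(compression φ v A) = #A :=
  card_image_of_injOn injOn_compressionMap

lemma zero_mem_compression (h : 0 ∈ A) : 0 ∈ compression φ v A :=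
  mem_image.mpr ⟨0, h, by simp [compressionMap]⟩

variable [Module (ZMod 2) G]

lemma mem_compression (hv : φ v = 1) {x : G} :
    x ∈ compression φ v A ↔ if φ x = 1 then x ∈ A ∧ x + v ∈ A else x ∈ A ∨ x + v ∈ A := by
  have hvv : ∀ y : G, y + v + v = y := fun y => by rw [add_assoc, ZModModule.add_self, add_zero]
  have hφ : ∀ y : G, φ (y + v) = 1 ↔ φ y ≠ 1 := fun y => by
    rw [map_add, hv]
    rcases ZMod.eq_zero_or_eq_one_of_two (φ y) with h | h <;> simp [h]
  constructor
  · intro hx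
    obtain ⟨y, hy, rfl⟩ := mem_image.mp hx
    unfold compressionMap
    by_cases hmove : φ y = 1 ∧ y + v ∉ A
    · rw [if_pos hmove, if_neg fun h => (hφ y).mp h hmove.1, hvv]
      exact .inr hy
    · rw [if_neg hmove]
      split_ifs with h
      · exact ⟨hy, not_not.mp fun h' => hmove ⟨h, h'⟩⟩
      · exact .inl hy
  · intro hx
    by_cases hxA : x ∈ A
    · refine mem_image.mpr ⟨x, hxA, if_neg fun hm => ?_⟩
      rw [if_pos hm.1] at hx
      exact hm.2 hx.2
    · have hφx : φ x ≠ 1 := fun h => hxA (by rw [if_pos h] at hx; exact hx.1)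
      have hxv : x + v ∈ A := by simpa [hφx, hxA] using hx
      refine mem_image.mpr ⟨x + v, hxv, ?_⟩
      rw [compressionMap, if_pos ⟨(hφ x).mpr hφx, by rwa [hvv]⟩, hvv]

lemma compression_add_subset (hv : φ v = 1) :
    compression φ v A + compression φ v B ⊆ compression φ v (A + B) := by
  intro z hz
  obtain ⟨a, ha, b, hb, rfl⟩ := mem_add.mp hz
  have hab : ∀ x ∈ A, ∀ y ∈ B, x + y ∈ A + B := fun x hx y hy => add_mem_add hx hy
  have h1 : a + v + b = a + b + v := by abel
  have h2 : a + (b + v) = a + b + v := by abel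
  have h3 : a + v + (b + v) = a + b := by
    rw [add_add_add_comm, ZModModule.add_self, add_zero]
  rw [mem_compression hv] at ha hb ⊢
  rw [map_add]
  rcases ZMod.eq_zero_or_eq_one_of_two (φ a) with ha1 | ha1 <;>
    rcases ZMod.eq_zero_or_eq_one_of_two (φ b) with hb1 | hb1 <;>
    grind

lemma card_compression_add_le (hv : φ v = 1) :
    #(compression φ v A + compression φ v A) ≤ #(A + A) :=
  (card_le_card (compression_add_subset hv)).trans_eq card_compression

end Compression

section Cube

variable {n d : ℕ} {x v : F2 n} {j : Fin n} {A : Finset (F2 n)}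

def coord (j : Fin n) : F2 n →+ ZMod 2 := Pi.evalAddMonoidHom _ j

@[simp] lemma coord_apply (j : Fin n) (x : F2 n) : coord j x = x j := rfl

lemma stdBasis_apply (i k : Fin n) : stdBasis i k = if k = i then 1 else 0 := by
  simp [stdBasis, Pi.single_apply]

def binaryWeight (x : F2 n) : ℕ := ∑ k, (x k).val * 2 ^ (k : ℕ)

lemma binaryWeight_add_le (x y : F2 n) :
    binaryWeight (x + y) ≤ binaryWeight x + binaryWeight y := by
  simp only [binaryWeight, ← sum_add_distrib, ← add_mul]
  exact sum_le_sum fun k _ => Nat.mul_le_mul_right _ (ZMod.val_add_le _ _)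

lemma binaryWeight_stdBasis (i : Fin n) : binaryWeight (stdBasis i) = 2 ^ (i : ℕ) := by
  simp [binaryWeight, stdBasis_apply, apply_ite ZMod.val, ite_mul, ZMod.val_one]

lemma binaryWeight_add_stdBasis_add (hx : x j = 1) :
    binaryWeight (x + stdBasis j) + 2 ^ (j : ℕ) = binaryWeight x := by
  rw [← binaryWeight_stdBasis, binaryWeight, binaryWeight, binaryWeight, ← sum_add_distrib]
  refine sum_congr rfl fun k _ => ?_
  rw [← add_mul]
  by_cases hk : k = j
  · subst hk
    rw [Pi.add_apply, stdBasis_apply, if_pos rfl, hx]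
    rfl
  · simp [stdBasis_apply, hk]

def IsCompressionDirection (v : F2 n) (j : Fin n) : Prop :=
  v = stdBasis j ∨ ∃ i < j, v = stdBasis i + stdBasis j

lemma IsCompressionDirection.apply_self (hv : IsCompressionDirection v j) : v j = 1 := by
  rcases hv with rfl | ⟨i, hij, rfl⟩
  · simp [stdBasis_apply]
  · simp [stdBasis_apply, hij.ne']

lemma IsCompressionDirection.binaryWeight_add_lt (hv : IsCompressionDirection v j)
    (hx : x j = 1) : binaryWeight (x + v) < binaryWeight x := by
  have hj := binaryWeight_add_stdBasis_add hx
  rcases hv with rfl | ⟨i, hij, rfl⟩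
  · have := Nat.two_pow_pos j
    omega
  · have hij : 2 ^ (i : ℕ) < 2 ^ (j : ℕ) := Nat.pow_lt_pow_right one_lt_two hij
    calc binaryWeight (x + (stdBasis i + stdBasis j))
        = binaryWeight (x + stdBasis j + stdBasis i) := by rw [add_comm (stdBasis i), add_assoc]
      _ ≤ binaryWeight (x + stdBasis j) + 2 ^ (i : ℕ) := by
        rw [← binaryWeight_stdBasis]
        exact binaryWeight_add_le _ _
      _ < binaryWeight x := by omega

lemma IsCompressionDirection.sum_binaryWeight_compression_lt (hv : IsCompressionDirection v j)
    (hne : compression (coord j) v A ≠ A) :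
    ∑ x ∈ compression (coord j) v A, binaryWeight x < ∑ x ∈ A, binaryWeight x := by
  have hmoved : ∃ x ∈ A, x j = 1 ∧ x + v ∉ A := by
    by_contra! h
    refine hne ((image_congr fun x hx => ?_).trans image_id)
    exact if_neg fun hm => hm.2 (h x hx hm.1)
  rw [compression, sum_image injOn_compressionMap]
  refine sum_lt_sum (fun x _ => ?_) ?_
  · unfold compressionMap
    split_ifs with hm
    · exact (hv.binaryWeight_add_lt hm.1).le
    · exact le_rfl
  · obtain ⟨x, hxA, hx1, hxv⟩ := hmoved
    refine ⟨x, hxA, ?_⟩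
    rw [compressionMap, if_pos ⟨hx1, hxv⟩]
    exact hv.binaryWeight_add_lt hx1

lemma isDownset_of_forall_compression_eq
    (h : ∀ j, compression (coord j) (stdBasis j) A = A) : IsDownset A := by
  intro x i hxi hx
  rw [← h i, mem_compression (by simp [stdBasis_apply]), coord_apply, if_neg (by simp [hxi])]
  exact .inr hx

lemma isShiftMinimal_of_forall_compression_eq
    (h : ∀ i j, i < j → compression (coord j) (stdBasis i + stdBasis j) A = A) :
    IsShiftMinimal A := by
  intro x i j hij hxi hxj hx
  rw [← h i j hij, mem_compression (by simp [stdBasis_apply, hij.ne']), coord_apply,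
    if_neg (by simp [stdBasis_apply, hxj, hij.ne'])]
  right
  rwa [add_assoc, ← add_assoc (stdBasis i), ZModModule.add_self, zero_add]

def HasInitialBasis (d : ℕ) (A : Finset (F2 n)) : Prop :=
  0 ∈ A ∧ ∀ k : Fin n, (k : ℕ) < d → stdBasis k ∈ A

lemma HasInitialBasis.compression (hA : HasInitialBasis d A) (hv : IsCompressionDirection v j) :
    HasInitialBasis d (compression (coord j) v A) := by
  refine ⟨zero_mem_compression hA.1, fun k hk => ?_⟩
  rw [mem_compression hv.apply_self, coord_apply]
  by_cases hkj : k = j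
  · subst hkj
    rw [if_pos (by simp [stdBasis_apply])]
    refine ⟨hA.2 k hk, ?_⟩
    rcases hv with rfl | ⟨i, hik, rfl⟩
    · simpa [ZModModule.add_self] using hA.1
    · rw [add_left_comm, ZModModule.add_self, add_zero]
      exact hA.2 i ((Fin.lt_def.mp hik).trans hk)
  · rw [if_neg (by simp [stdBasis_apply, Ne.symm hkj])]
    exact .inl (hA.2 k hk)

lemma HasInitialBasis.le_finrank (hA : HasInitialBasis d A) (hd : d ≤ n)
    {W : Submodule (ZMod 2) (F2 n)} {t : F2 n} (hAW : (A : Set (F2 n)) ⊆ t +ᵥ (W : Set (F2 n))) :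
    d ≤ finrank (ZMod 2) W :=
  le_finrank_of_basis_apply_mem (Pi.basisFun (ZMod 2) (Fin n)) hd fun k hk =>
    mem_of_mem_vadd_of_zero_mem (hAW hA.1) (by rw [Pi.basisFun_apply]; exact hAW (hA.2 k hk))

lemma exists_linearEquiv_hasInitialBasis_image (h0 : 0 ∈ A) :
    ∃ L : F2 n ≃ₗ[ZMod 2] F2 n,
      HasInitialBasis (finrank (ZMod 2) (span (ZMod 2) (A : Set (F2 n)))) (A.image L) := by
  obtain ⟨b, hb⟩ :=
    exists_basis_fin_apply_mem_of_lt_finrank_span (finrank_fin_fun (ZMod 2)) (A : Set (F2 n))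
  refine ⟨b.equivFun, mem_image.mpr ⟨0, h0, map_zero _⟩,
    fun k hk => mem_image.mpr ⟨b k, hb k hk, ?_⟩⟩
  ext i
  simp [Basis.equivFun_self, stdBasis_apply, eq_comm]

theorem exists_isDownset_isShiftMinimal_of_hasInitialBasis (hA : HasInitialBasis d A) :
    ∃ B : Finset (F2 n), #B = #A ∧ #(B + B) ≤ #(A + A) ∧ HasInitialBasis d B ∧
      IsDownset B ∧ IsShiftMinimal B := by
  classical
  obtain ⟨B, hB, hmin⟩ :=
    (univ.filter fun B : Finset (F2 n) => #B = #A ∧ #(B + B) ≤ #(A + A) ∧ HasInitialBasis d B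
      ).exists_min_image (fun B => ∑ x ∈ B, binaryWeight x) ⟨A, by simp [hA]⟩
  simp only [mem_filter, mem_univ, true_and] at hB hmin
  obtain ⟨hcard, hadd, hinit⟩ := hB
  have hfix : ∀ v j, IsCompressionDirection v j → compression (coord j) v B = B := by
    intro v j hv
    by_contra hne
    exact (hv.sum_binaryWeight_compression_lt hne).not_ge <| hmin _ ⟨card_compression.trans hcard,
      (card_compression_add_le hv.apply_self).trans hadd, hinit.compression hv⟩
  exact ⟨B, hcard, hadd, hinit, isDownset_of_forall_compression_eq fun j => hfix _ j (.inl rfl),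
    isShiftMinimal_of_forall_compression_eq fun i j hij => hfix _ j (.inr ⟨i, hij, rfl⟩)⟩

end Cube

theorem freiman_reduces_to_smd_general (K c : ℝ)
    (h : ∀ m : ℕ, 1 ≤ m → ∀ B : Finset (F2 m), B.Nonempty →
      IsDownset B → IsShiftMinimal B → ((B + B).card : ℝ) ≤ K * B.card →
      ∃ (W : Submodule (ZMod 2) (F2 m)) (t : F2 m),
        (↑B : Set (F2 m)) ⊆ t +ᵥ (W : Set (F2 m)) ∧ (Nat.card W : ℝ) ≤ c * B.card) :
    ∀ n : ℕ, 1 ≤ n → ∀ A : Finset (F2 n), A.Nonempty →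
      ((A + A).card : ℝ) ≤ K * A.card →
      ∃ (W : Submodule (ZMod 2) (F2 n)) (t : F2 n),
        (↑A : Set (F2 n)) ⊆ t +ᵥ (W : Set (F2 n)) ∧ (Nat.card W : ℝ) ≤ c * A.card := by
  intro n hn A ⟨a, ha⟩ hA
  set A₀ := A.image (· + a)
  obtain ⟨L, hL⟩ :=
    exists_linearEquiv_hasInitialBasis_image (A := A₀) (mem_image.mpr ⟨a, ha, ZModModule.add_self a⟩)
  obtain ⟨B, hcard, hadd, hinit, hdown, hshift⟩ :=
    exists_isDownset_isShiftMinimal_of_hasInitialBasis hL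
  have hcardB : #B = #A := by
    rw [hcard, card_image_of_injective _ L.injective,
      card_image_of_injective _ (add_left_injective a)]
  have haddB : #(B + B) ≤ #(A + A) := by
    refine hadd.trans_eq ?_
    rw [← image_add L, card_image_of_injective _ L.injective, image_add_right_add_self]
  obtain ⟨W, t, hBW, hW⟩ := h n hn B ⟨0, hinit.1⟩ hdown hshift
    (by rw [hcardB]; exact (Nat.cast_le.mpr haddB).trans hA)
  have hd : finrank (ZMod 2) (span (ZMod 2) (A₀ : Set (F2 n))) ≤ finrank (ZMod 2) W :=
    hinit.le_finrank ((finrank_le _).trans_eq (finrank_fin_fun _)) hBW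
  exact ⟨_, a, coe_subset_vadd_span_image_add A a,
    (Nat.cast_le.mpr (natCard_le_natCard_of_finrank_le hd)).trans (hcardB ▸ hW)⟩

/-- Reduction of Freiman's theorem to shift-minimal downsets (Lemma 1.9):
if every nonempty SMD of doubling at most `K` is contained in an affine subspace
of size at most `c` times its cardinality, then so is every nonempty set of
doubling at most `K`. -/
theorem freiman_reduces_to_smd (K c : ℝ) (hK : 1 ≤ K) (hc : 1 ≤ c)
    (h : ∀ m : ℕ, 1 ≤ m → ∀ B : Finset (F2 m), B.Nonempty →
      IsDownset B → IsShiftMinimal B → ((B + B).card : ℝ) ≤ K * B.card →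
      ∃ (W : Submodule (ZMod 2) (F2 m)) (t : F2 m),
        (↑B : Set (F2 m)) ⊆ t +ᵥ (W : Set (F2 m)) ∧ (Nat.card W : ℝ) ≤ c * B.card) :
    ∀ n : ℕ, 1 ≤ n → ∀ A : Finset (F2 n), A.Nonempty →
      ((A + A).card : ℝ) ≤ K * A.card →
      ∃ (W : Submodule (ZMod 2) (F2 n)) (t : F2 n),
        (↑A : Set (F2 n)) ⊆ t +ᵥ (W : Set (F2 n)) ∧ (Nat.card W : ℝ) ≤ c * A.card :=
  freiman_reduces_to_smd_general K c h
end

section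
/- For every n ≥ 0 and all natural numbers a, b, there exists a natural number c such that S_a + S_b = S_c in F_2^n; that is, the sumset of two initial segments of the lexicographical order on F_2^n is again an initial segment. -/
open Finset Pointwise

/-- The value of `x ∈ F_2^n` read as a binary number: `Σ xᵢ 2^i` (0-indexed). -/
def lexVal {n : ℕ} (x : F2 n) : ℕ := ∑ i : Fin n, (x i).val * 2 ^ (i : ℕ)

/-- The initial segment of length `m` of the lexicographical order on `F_2^n`. -/
def lexSeg (n m : ℕ) : Finset (F2 n) := Finset.univ.filter fun x => lexVal x < m


lemma xor_step (u v w j : ℕ) (hu : Nat.testBit u j = true) (hw : Nat.testBit w j = false)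
    (huv : Nat.testBit (u ^^^ v) j = true)
    (hagree : ∀ k, j < k → Nat.testBit w k = Nat.testBit (u ^^^ v) k) :
    ∃ u' v', u' ≤ u ∧ v' ≤ v ∧ u' ^^^ v' = w := by
  have hv : Nat.testBit v j = false := by
    have := huv; rw [Nat.testBit_xor, hu] at this; simpa using this
  set v' := (v >>> (j+1)) <<< (j+1) with hv'def
  have tv' : ∀ i, Nat.testBit v' i = (decide (j+1 ≤ i) && Nat.testBit v i) := by
    intro i
    rw [hv'def, Nat.testBit_shiftLeft, Nat.testBit_shiftRight]
    by_cases h : j + 1 ≤ i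
    · simp [h, Nat.add_sub_cancel' h]
    · simp [h]
  have hv'le : v' ≤ v := by
    rw [hv'def, Nat.shiftLeft_eq, Nat.shiftRight_eq_div_pow]
    exact Nat.div_mul_le_self v (2 ^ (j+1))
  refine ⟨w ^^^ v', v', ?_, hv'le, by rw [Nat.xor_assoc, Nat.xor_self, Nat.xor_zero]⟩
  refine le_of_lt (Nat.lt_of_testBit j ?_ hu ?_)
  · rw [Nat.testBit_xor, hw, tv']
    simp
  · intro k hk
    rw [Nat.testBit_xor, tv', hagree k hk, Nat.testBit_xor]
    have : j + 1 ≤ k := hk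
    cases Nat.testBit u k <;> cases Nat.testBit v k <;> simp [this]

lemma xor_down (u v w : ℕ) (h : w < u ^^^ v) :
    ∃ u' v', u' ≤ u ∧ v' ≤ v ∧ u' ^^^ v' = w := by
  have hd : (u ^^^ v) ^^^ w ≠ 0 := by
    intro h0
    have : u ^^^ v = w := by
      have := congrArg (· ^^^ w) h0
      simpa [Nat.xor_assoc] using this
    omega
  obtain ⟨j, hj1, hj2⟩ := Nat.exists_most_significant_bit hd
  have hagree : ∀ k, j < k → Nat.testBit w k = Nat.testBit (u ^^^ v) k := by
    intro k hk
    have := hj2 k hk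
    rw [Nat.testBit_xor] at this
    cases h1 : Nat.testBit (u ^^^ v) k <;> cases h2 : Nat.testBit w k <;>
      simp [h1, h2] at this ⊢
  have hdiff : Nat.testBit (u ^^^ v) j ≠ Nat.testBit w j := by
    rw [Nat.testBit_xor] at hj1
    intro he; rw [he] at hj1; simp at hj1
  have hw : Nat.testBit w j = false := by
    by_contra hc
    have hw' : Nat.testBit w j = true := by simpa using hc
    have huv' : Nat.testBit (u ^^^ v) j = false := by
      cases h1 : Nat.testBit (u ^^^ v) j
      · rfl
      · rw [h1, hw'] at hdiff; simp at hdiff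
    have : u ^^^ v < w := Nat.lt_of_testBit j huv' hw' (fun k hk => (hagree k hk).symm)
    omega
  have huv : Nat.testBit (u ^^^ v) j = true := by
    cases h1 : Nat.testBit (u ^^^ v) j
    · rw [h1, hw] at hdiff; simp at hdiff
    · rfl
  have hor : Nat.testBit u j = true ∨ Nat.testBit v j = true := by
    rw [Nat.testBit_xor] at huv
    cases h1 : Nat.testBit u j
    · right; cases h2 : Nat.testBit v j
      · rw [h1, h2] at huv; simp at huv
      · rfl
    · left; rfl
  rcases hor with hu | hv
  · exact xor_step u v w j hu hw huv hagree
  · obtain ⟨v', u', h1, h2, h3⟩ := xor_step v u w j hv hw (by rwa [Nat.xor_comm])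
      (by intro k hk; rw [Nat.xor_comm]; exact hagree k hk)
    exact ⟨u', v', h2, h1, by rwa [Nat.xor_comm]⟩


lemma lexVal_lt {n : ℕ} (x : F2 n) : lexVal x < 2 ^ n := by
  induction n with
  | zero => simp [lexVal]
  | succ n ih =>
    have : lexVal x = lexVal (fun i : Fin n => x i.castSucc) + (x (Fin.last n)).val * 2 ^ n := by
      simp [lexVal, Fin.sum_univ_castSucc]
    rw [this]
    have h1 := ih (fun i : Fin n => x i.castSucc)
    have h2 : (x (Fin.last n)).val ≤ 1 := by
      have := (x (Fin.last n)).val_lt; omega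
    have : (x (Fin.last n)).val * 2 ^ n ≤ 2 ^ n := by
      nlinarith
    rw [pow_succ]
    omega

lemma testBit_lexVal {n : ℕ} (x : F2 n) (k : ℕ) :
    (lexVal x).testBit k = if h : k < n then decide (x ⟨k, h⟩ = 1) else false := by
  induction n with
  | zero => simp [lexVal]
  | succ n ih =>
    have hdec : lexVal x = 2 ^ n * (x (Fin.last n)).val + lexVal (fun i : Fin n => x i.castSucc) := by
      simp [lexVal, Fin.sum_univ_castSucc, Nat.add_comm, Nat.mul_comm]
    have hlt := lexVal_lt (fun i : Fin n => x i.castSucc)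
    have hval : (x (Fin.last n)).val < 2 := (x (Fin.last n)).val_lt
    rcases lt_trichotomy k n with hk | hk | hk
    · rw [hdec]
      have heq : Nat.testBit (2 ^ n * (x (Fin.last n)).val + lexVal (fun i : Fin n => x i.castSucc)) k
          = Nat.testBit (lexVal (fun i : Fin n => x i.castSucc)) k := by
        rcases (show (x (Fin.last _)).val = 0 ∨ (x (Fin.last _)).val = 1 by omega) with h0 | h1
        · rw [h0]; simp
        · rw [h1, Nat.mul_one]; exact Nat.testBit_two_pow_add_gt hk _
      rw [heq, ih]
      have h1 : k < n := hk
      have h2 : k < n + 1 := by omega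
      simp [h1, h2]
    · subst hk
      rw [hdec, Nat.testBit_mul_two_pow_add_eq]
      rw [Nat.testBit_lt_two_pow hlt]
      have h2 : k < k + 1 := by omega
      simp [h2]
      rcases (show (x (Fin.last _)).val = 0 ∨ (x (Fin.last _)).val = 1 by omega) with h0 | h1
      · rw [h0]
        have : x (Fin.last k) ≠ 1 := by
          intro hc; rw [hc] at h0; simp [ZMod.val_one] at h0
        simp [this]
        exact this
      · rw [h1]
        have : x (Fin.last k) = 1 := by
          have := ZMod.val_cast_of_lt (show (1:ℕ) < 2 by omega)
          have hh : ((x (Fin.last k)).val : ZMod 2) = x (Fin.last k) := ZMod.natCast_zmod_val _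
          rw [h1] at hh; simpa using hh.symm
        simp [this]
        exact this
    · have h1 : ¬ (k < n + 1) := by omega
      rw [Nat.testBit_lt_two_pow (lt_of_lt_of_le (lexVal_lt x) (Nat.pow_le_pow_right (by omega) (by omega)))]
      simp [h1]

lemma lexVal_add {n : ℕ} (x y : F2 n) : lexVal (x + y) = lexVal x ^^^ lexVal y := by
  apply Nat.eq_of_testBit_eq
  intro k
  rw [Nat.testBit_xor, testBit_lexVal, testBit_lexVal, testBit_lexVal]
  by_cases h : k < n
  · simp only [h, dif_pos]
    have key : ∀ u v : ZMod 2, (u + v = 1) ↔ ¬(u = 1 ↔ v = 1) := by decide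
    have : (x + y) ⟨k, h⟩ = x ⟨k, h⟩ + y ⟨k, h⟩ := rfl
    rw [this]
    rcases (key (x ⟨k,h⟩) (y ⟨k,h⟩)) with _
    by_cases hx : x ⟨k,h⟩ = 1 <;> by_cases hy : y ⟨k,h⟩ = 1 <;>
      simp [hx, hy, key]
  · simp [h]

lemma lexVal_inj {n : ℕ} (x y : F2 n) (h : lexVal x = lexVal y) : x = y := by
  funext i
  have := congrArg (fun m => Nat.testBit m i) h
  simp only [testBit_lexVal] at this
  have hi : (i : ℕ) < n := i.isLt
  simp only [hi, dif_pos] at this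
  have hxy : (x ⟨i, hi⟩ = 1) ↔ (y ⟨i, hi⟩ = 1) := by
    constructor <;> intro hh <;> simp [hh] at this ⊢ <;>
      [skip; skip] <;> first | (by_contra hc; simp [hc] at this) | exact this
  have key : ∀ u v : ZMod 2, ((u = 1) ↔ (v = 1)) → u = v := by decide
  have : x ⟨i, hi⟩ = y ⟨i, hi⟩ := key _ _ hxy
  simpa using this

lemma lexVal_surj {n : ℕ} (m : ℕ) (hm : m < 2 ^ n) : ∃ x : F2 n, lexVal x = m := by
  refine ⟨fun i => if m.testBit i then 1 else 0, Nat.eq_of_testBit_eq fun k => ?_⟩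
  rw [testBit_lexVal]
  by_cases h : k < n
  · simp only [h, dif_pos]
    by_cases hb : m.testBit k
    · simp [hb]
    · simp [hb]
  · simp only [h, dif_neg, not_false_iff]
    rw [Nat.testBit_lt_two_pow (lt_of_lt_of_le hm (Nat.pow_le_pow_right (by omega) (by omega)))]

lemma mem_lexSeg {n m : ℕ} (x : F2 n) : x ∈ lexSeg n m ↔ lexVal x < m := by
  simp [lexSeg]

/-- Adding initial segments of the lex order (Lemma 2.2): the sumset of two
initial segments of the lex order on `F_2^n` is again an initial segment. -/
theorem lexSeg_add_lexSeg (n a b : ℕ) :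
    ∃ c : ℕ, lexSeg n a + lexSeg n b = lexSeg n c := by
  set S := lexSeg n a + lexSeg n b with hS
  rcases S.eq_empty_or_nonempty with he | hne
  · refine ⟨0, by rw [he]; ext x; simp [mem_lexSeg]⟩
  · have hne' : (S.image lexVal).Nonempty := hne.image _
    set M := (S.image lexVal).max' hne' with hM
    refine ⟨M + 1, ?_⟩
    ext z
    rw [mem_lexSeg]
    constructor
    · intro hz
      have : lexVal z ∈ S.image lexVal := mem_image_of_mem _ hz
      have := le_max' _ _ this
      omega
    · intro hz
      have hMmem : M ∈ S.image lexVal := max'_mem _ _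
      obtain ⟨x₀, hx₀S, hx₀⟩ := mem_image.mp hMmem
      obtain ⟨x, hx, y, hy, hxy⟩ := mem_add.mp hx₀S
      rw [mem_lexSeg] at hx hy
      rcases eq_or_lt_of_le (Nat.lt_succ_iff.mp hz) with heq | hlt
      · have : z = x₀ := lexVal_inj _ _ (heq.trans hx₀.symm)
        rw [this]; exact hx₀S
      · rw [← hx₀, ← hxy, lexVal_add] at hlt
        obtain ⟨u', v', hu', hv', huv⟩ := xor_down _ _ _ hlt
        obtain ⟨x', hx'⟩ := lexVal_surj u' (lt_of_le_of_lt hu' (lexVal_lt x))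
        obtain ⟨y', hy'⟩ := lexVal_surj v' (lt_of_le_of_lt hv' (lexVal_lt y))
        have hz' : x' + y' = z := by
          apply lexVal_inj
          rw [lexVal_add, hx', hy', huv]
        rw [← hz']
        exact add_mem_add (by rw [mem_lexSeg, hx']; omega) (by rw [mem_lexSeg, hy']; omega)
end

section
/- If A, B ⊆ F_2^n are shift-minimal downsets, then A + B is a shift-minimal downset. -/
open Finset Pointwise

lemma F2.two_cases (z : ZMod 2) : z = 0 ∨ z = 1 := by revert z; decide

lemma F2.add_self {n : ℕ} (v : F2 n) : v + v = 0 := by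
  funext k
  have : ∀ z : ZMod 2, z + z = 0 := by decide
  exact this (v k)

lemma F2.cancel {n : ℕ} (u v : F2 n) : u + v + v = u := by
  rw [add_assoc, F2.add_self, add_zero]

lemma stdBasis_same {n : ℕ} (i : Fin n) : stdBasis i i = 1 := by
  simp [stdBasis]

lemma stdBasis_ne {n : ℕ} {i k : Fin n} (h : k ≠ i) : stdBasis i k = 0 := by
  simp [stdBasis, Pi.single_eq_of_ne h]

lemma helper {n : ℕ} {A B : Finset (F2 n)}
    (hA : IsDownset A) (hA' : IsShiftMinimal A) (hB : IsDownset B)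
    {x : F2 n} {i j : Fin n} (hij : i < j) (hxi : x i = 0) (hxj : x j = 0)
    {a b : F2 n} (ha : a ∈ A) (hb : b ∈ B)
    (hab : a + b = x + stdBasis j) (haj : a j = 1) :
    x + stdBasis i ∈ A + B := by
  have hijne : i ≠ j := hij.ne
  have hsum_i : a i + b i = 0 := by
    have := congrFun hab i
    simpa [Pi.add_apply, stdBasis_ne hijne, hxi] using this
  rcases F2.two_cases (a i) with hai | hai
  · -- a i = 0, so b i = 0; use shift-minimality of A
    have hbi : b i = 0 := by
      rcases F2.two_cases (b i) with h | h
      · exact h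
      · rw [hai, h] at hsum_i; simp at hsum_i
    have hy1 : (a + stdBasis j) i = 0 := by
      simp [Pi.add_apply, stdBasis_ne hijne, hai]
    have hy2 : (a + stdBasis j) j = 0 := by
      simp [Pi.add_apply, stdBasis_same, haj]
      decide
    have hyA : (a + stdBasis j) + stdBasis j ∈ A := by
      rw [F2.cancel]; exact ha
    have hA2 : (a + stdBasis j) + stdBasis i ∈ A := hA' _ i j hij hy1 hy2 hyA
    have hmem := Finset.add_mem_add hA2 hb
    have heq : (a + stdBasis j + stdBasis i) + b = x + stdBasis i := by
      calc (a + stdBasis j + stdBasis i) + b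
          = (a + b) + stdBasis i + stdBasis j := by abel
        _ = (x + stdBasis j) + stdBasis i + stdBasis j := by rw [hab]
        _ = (x + stdBasis i) + stdBasis j + stdBasis j := by abel
        _ = x + stdBasis i := F2.cancel _ _
    rwa [heq] at hmem
  · -- a i = 1, so b i = 1; use downsets
    have hbi : b i = 1 := by
      rcases F2.two_cases (b i) with h | h
      · rw [hai, h] at hsum_i; simp at hsum_i
      · exact h
    have haA : a + stdBasis j ∈ A := by
      apply hA _ j
      · simp [Pi.add_apply, stdBasis_same, haj]; decide
      · rw [F2.cancel]; exact ha
    have hbB : b + stdBasis i ∈ B := by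
      apply hB _ i
      · simp [Pi.add_apply, stdBasis_same, hbi]; decide
      · rw [F2.cancel]; exact hb
    have hmem := Finset.add_mem_add haA hbB
    have heq : (a + stdBasis j) + (b + stdBasis i) = x + stdBasis i := by
      calc (a + stdBasis j) + (b + stdBasis i)
          = (a + b) + stdBasis i + stdBasis j := by abel
        _ = (x + stdBasis j) + stdBasis i + stdBasis j := by rw [hab]
        _ = (x + stdBasis i) + stdBasis j + stdBasis j := by abel
        _ = x + stdBasis i := F2.cancel _ _
    rwa [heq] at hmem

/-- The sum of two shift-minimal downsets is a shift-minimal downset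
(Corollary 2.10). -/
theorem smd_add {n : ℕ} (A B : Finset (F2 n))
    (hA : IsDownset A) (hA' : IsShiftMinimal A)
    (hB : IsDownset B) (hB' : IsShiftMinimal B) :
    IsDownset (A + B) ∧ IsShiftMinimal (A + B) := by
  constructor
  · -- downset
    intro x i hxi hmem
    rw [Finset.mem_add] at hmem
    obtain ⟨a, ha, b, hb, hab⟩ := hmem
    have hsum_i : a i + b i = 1 := by
      have := congrFun hab i
      simpa [Pi.add_apply, stdBasis_same, hxi] using this
    rw [Finset.mem_add]
    rcases F2.two_cases (a i) with hai | hai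
    · -- a i = 0, b i = 1
      have hbi : b i = 1 := by
        rcases F2.two_cases (b i) with h | h
        · rw [hai, h] at hsum_i; simp at hsum_i
        · exact h
      refine ⟨a, ha, b + stdBasis i, ?_, ?_⟩
      · apply hB _ i
        · simp [Pi.add_apply, stdBasis_same, hbi]; decide
        · rw [F2.cancel]; exact hb
      · calc a + (b + stdBasis i) = (a + b) + stdBasis i := by abel
          _ = (x + stdBasis i) + stdBasis i := by rw [hab]
          _ = x := F2.cancel _ _
    · -- a i = 1
      refine ⟨a + stdBasis i, ?_, b, hb, ?_⟩
      · apply hA _ i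
        · simp [Pi.add_apply, stdBasis_same, hai]; decide
        · rw [F2.cancel]; exact ha
      · calc (a + stdBasis i) + b = (a + b) + stdBasis i := by abel
          _ = (x + stdBasis i) + stdBasis i := by rw [hab]
          _ = x := F2.cancel _ _
  · -- shift-minimal
    intro x i j hij hxi hxj hmem
    rw [Finset.mem_add] at hmem
    obtain ⟨a, ha, b, hb, hab⟩ := hmem
    have hsum_j : a j + b j = 1 := by
      have := congrFun hab j
      simpa [Pi.add_apply, stdBasis_same, hxj] using this
    rcases F2.two_cases (a j) with haj | haj
    · -- b j = 1, use helper with roles swapped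
      have hbj : b j = 1 := by
        rcases F2.two_cases (b j) with h | h
        · rw [haj, h] at hsum_j; simp at hsum_j
        · exact h
      have hab' : b + a = x + stdBasis j := by rw [add_comm]; exact hab
      have := helper hB hB' hA hij hxi hxj hb ha hab' hbj
      rwa [add_comm B A] at this
    · exact helper hA hA' hB hij hxi hxj ha hb hab haj
end

section
/- Let n ≥ 0 and r ≥ 0 be integers, and suppose A, B ⊆ H_r(n). Then |A + B| ≥ 9^(−r)·|A|·|B|. -/
/-!
Down-compression in a coordinate `i` replaces the two layers `A₀ = {x ∈ A : x i = 0}` and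
`A₁ = {x : x i = 0, x + e i ∈ A}` by `A₀ ∪ A₁` and `A₀ ∩ A₁`. Compressing `A` and `B` in the same
coordinate keeps them inside `H_r(n)`, preserves `|A|` and `|B|`, does not enlarge `A + B`, and
lowers the total Hamming totalWeight of `A` unless `A` is already compressed in that coordinate.
Hence we may assume that `A` is a downset. Then `a ∨ b = a (1 + b) + b ∈ A + B` for all
`a ∈ A`, `b ∈ B`, and every `c` has exactly `3 ^ ‖c‖` preimages under `(a, b) ↦ a ∨ b`
(each coordinate with `c j = 1` comes from `(1,0)`, `(0,1)` or `(1,1)`). As `‖c‖ ≤ 2r` on `A + B`,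
this gives `|A| |B| ≤ 9 ^ r |A + B|`.
-/

open Finset Pointwise

@[simp]
lemma ZMod.add_one_eq_zero_iff_ne_zero (a : ZMod 2) : a + 1 = 0 ↔ a ≠ 0 := by
  revert a; decide

theorem hammingNorm_add_le {ι : Type*} [Fintype ι] [DecidableEq ι] {β : ι → Type*}
    [∀ i, AddZeroClass (β i)] [∀ i, DecidableEq (β i)] (x y : ∀ i, β i) :
    hammingNorm (x + y) ≤ hammingNorm x + hammingNorm y := by
  refine (card_le_card fun i => ?_).trans (card_union_le _ _)
  simp only [mem_filter, mem_univ, true_and, mem_union, Pi.add_apply]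
  contrapose!
  rintro ⟨hx, hy⟩
  rw [hx, hy, add_zero]

/-- Read `A₀, A₁` as the two layers of a set in `G × F_2`: compressing a pair of such sets
downwards, `(A₀, A₁) ↦ (A₀ ∪ A₁, A₀ ∩ A₁)`, does not enlarge the layers of their sumset. -/
theorem Finset.card_union_add_card_union_le {α : Type*} [DecidableEq α] [Add α]
    (A₀ A₁ B₀ B₁ : Finset α) :
    #(((A₀ ∪ A₁) + (B₀ ∪ B₁)) ∪ ((A₀ ∩ A₁) + (B₀ ∩ B₁))) +
        #(((A₀ ∪ A₁) + (B₀ ∩ B₁)) ∪ ((A₀ ∩ A₁) + (B₀ ∪ B₁))) ≤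
      #((A₀ + B₀) ∪ (A₁ + B₁)) + #((A₀ + B₁) ∪ (A₁ + B₀)) := by
  set X := (A₀ + B₀) ∪ (A₁ + B₁)
  set Y := (A₀ + B₁) ∪ (A₁ + B₀)
  have hunion : ((A₀ ∪ A₁) + (B₀ ∪ B₁)) ∪ ((A₀ ∩ A₁) + (B₀ ∩ B₁)) ⊆ X ∪ Y := by
    intro x
    simp only [X, Y, mem_union, mem_inter, mem_add]
    grind
  have hinter : ((A₀ ∪ A₁) + (B₀ ∩ B₁)) ∪ ((A₀ ∩ A₁) + (B₀ ∪ B₁)) ⊆ X ∩ Y := by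
    intro x
    simp only [X, Y, mem_union, mem_inter, mem_add]
    grind
  calc _ ≤ #(X ∪ Y) + #(X ∩ Y) := add_le_add (card_le_card hunion) (card_le_card hinter)
    _ = #X + #Y := card_union_add_card_inter X Y

section

variable {n : ℕ}

@[simp]
lemma stdBasis_apply_self (i : Fin n) : stdBasis i i = 1 := Pi.single_eq_same i 1

@[simp]
lemma stdBasis_apply_of_ne {i j : Fin n} (h : j ≠ i) : stdBasis i j = 0 := Pi.single_eq_of_ne h 1

lemma stdBasis_add_self (i : Fin n) : stdBasis i + stdBasis i = 0 :=
  funext fun _ => CharTwo.add_self_eq_zero _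

@[simp]
lemma add_stdBasis_add_stdBasis (x : F2 n) (i : Fin n) : x + stdBasis i + stdBasis i = x := by
  rw [add_assoc, stdBasis_add_self, add_zero]

lemma add_stdBasis_add_add_stdBasis (x y : F2 n) (i : Fin n) :
    x + stdBasis i + (y + stdBasis i) = x + y := by
  rw [add_add_add_comm, stdBasis_add_self, add_zero]

lemma hammingNorm_add_stdBasis {x : F2 n} {i : Fin n} (hx : x i = 0) :
    hammingNorm (x + stdBasis i) = hammingNorm x + 1 := by
  have : univ.filter (fun j => (x + stdBasis i) j ≠ 0) = insert i (univ.filter (x · ≠ 0)) := by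
    ext j
    rcases eq_or_ne j i with rfl | hj
    · simp [hx]
    · simp [hj]
  rw [hammingNorm, this, card_insert_of_notMem (by simp [hx]), hammingNorm]

section Slices

variable (i : Fin n)

def lowerSlice (S : Finset (F2 n)) : Finset (F2 n) := S.filter (· i = 0)

/-- The layer `x i = 1` of `S`, translated by `e i` onto the hyperplane `x i = 0`. -/
def upperSlice (S : Finset (F2 n)) : Finset (F2 n) := lowerSlice i (S + {stdBasis i})

variable {i}

lemma mem_lowerSlice {S : Finset (F2 n)} {x : F2 n} : x ∈ lowerSlice i S ↔ x ∈ S ∧ x i = 0 :=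
  mem_filter

lemma mem_add_singleton_stdBasis {S : Finset (F2 n)} {x : F2 n} :
    x ∈ S + {stdBasis i} ↔ x + stdBasis i ∈ S := by
  simp only [mem_add, mem_singleton, exists_eq_left]
  exact ⟨fun ⟨y, hy, hyx⟩ => hyx ▸ (add_stdBasis_add_stdBasis y i).symm ▸ hy,
    fun h => ⟨_, h, add_stdBasis_add_stdBasis x i⟩⟩

lemma mem_upperSlice {S : Finset (F2 n)} {x : F2 n} :
    x ∈ upperSlice i S ↔ x + stdBasis i ∈ S ∧ x i = 0 := by
  rw [upperSlice, mem_lowerSlice, mem_add_singleton_stdBasis]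

lemma sum_eq_sum_lowerSlice_add_sum_upperSlice {M : Type*} [AddCommMonoid M]
    (S : Finset (F2 n)) (f : F2 n → M) :
    ∑ x ∈ S, f x = ∑ x ∈ lowerSlice i S, f x + ∑ x ∈ upperSlice i S, f (x + stdBasis i) := by
  rw [← sum_filter_add_sum_filter_not S (· i = 0)]
  congr 1
  refine sum_nbij' (· + stdBasis i) (· + stdBasis i) ?_ ?_ (by simp) (by simp) (by simp) <;>
    intro x hx <;> simp_all [mem_upperSlice]

lemma card_eq_card_lowerSlice_add_card_upperSlice (S : Finset (F2 n)) :
    #S = #(lowerSlice i S) + #(upperSlice i S) := by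
  simp only [card_eq_sum_ones]
  exact sum_eq_sum_lowerSlice_add_sum_upperSlice S _

lemma lowerSlice_add (A B : Finset (F2 n)) :
    lowerSlice i (A + B) =
      (lowerSlice i A + lowerSlice i B) ∪ (upperSlice i A + upperSlice i B) := by
  ext x
  simp only [mem_union, mem_add, mem_lowerSlice, mem_upperSlice]
  constructor
  · rintro ⟨⟨a, ha, b, hb, rfl⟩, hab⟩
    replace hab : a i = b i := CharTwo.add_eq_zero.mp hab
    by_cases hai : a i = 0
    · exact Or.inl ⟨a, ⟨ha, hai⟩, b, ⟨hb, hab ▸ hai⟩, rfl⟩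
    · refine Or.inr ⟨a + stdBasis i, ⟨by simpa, by simpa⟩, b + stdBasis i, ⟨by simpa, ?_⟩,
        add_stdBasis_add_add_stdBasis a b i⟩
      simpa [← hab]
  · rintro (⟨a, ⟨ha, hai⟩, b, ⟨hb, hbi⟩, rfl⟩ | ⟨a, ⟨ha, hai⟩, b, ⟨hb, hbi⟩, rfl⟩)
    · exact ⟨⟨a, ha, b, hb, rfl⟩, by simp [hai, hbi]⟩
    · exact ⟨⟨_, ha, _, hb, add_stdBasis_add_add_stdBasis a b i⟩, by simp [hai, hbi]⟩

lemma upperSlice_add (A B : Finset (F2 n)) :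
    upperSlice i (A + B) =
      (lowerSlice i A + upperSlice i B) ∪ (upperSlice i A + lowerSlice i B) := by
  have hB : B + {stdBasis i} + {stdBasis i} = B := by
    rw [add_assoc, singleton_add_singleton, stdBasis_add_self, singleton_zero, add_zero]
  rw [upperSlice, add_assoc, lowerSlice_add, upperSlice, upperSlice, hB]
  rfl

end Slices

lemma mem_hamBall {r : ℕ} {x : F2 n} : x ∈ hamBall n r ↔ hammingNorm x ≤ r := by
  simp [hamBall]

section Compression

variable (i : Fin n)

def compress (A : Finset (F2 n)) : Finset (F2 n) :=
  lowerSlice i A ∪ upperSlice i A ∪ (lowerSlice i A ∩ upperSlice i A + {stdBasis i})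

variable {i}

lemma lowerSlice_compress (A : Finset (F2 n)) :
    lowerSlice i (compress i A) = lowerSlice i A ∪ upperSlice i A := by
  ext x
  simp only [compress, mem_lowerSlice, mem_union, mem_inter, mem_upperSlice,
    mem_add_singleton_stdBasis, Pi.add_apply, stdBasis_apply_self,
    ZMod.add_one_eq_zero_iff_ne_zero]
  tauto

lemma upperSlice_compress (A : Finset (F2 n)) :
    upperSlice i (compress i A) = lowerSlice i A ∩ upperSlice i A := by
  ext x
  simp only [compress, mem_lowerSlice, mem_union, mem_inter, mem_upperSlice,
    mem_add_singleton_stdBasis, add_stdBasis_add_stdBasis, Pi.add_apply, stdBasis_apply_self,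
    ZMod.add_one_eq_zero_iff_ne_zero]
  tauto

lemma card_compress (A : Finset (F2 n)) : #(compress i A) = #A := by
  rw [card_eq_card_lowerSlice_add_card_upperSlice (i := i) (compress i A), lowerSlice_compress,
    upperSlice_compress, card_union_add_card_inter, ← card_eq_card_lowerSlice_add_card_upperSlice]

lemma card_compress_add_compress_le (A B : Finset (F2 n)) :
    #(compress i A + compress i B) ≤ #(A + B) := by
  rw [card_eq_card_lowerSlice_add_card_upperSlice (i := i), lowerSlice_add, upperSlice_add,
    lowerSlice_compress, upperSlice_compress, lowerSlice_compress, upperSlice_compress,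
    card_eq_card_lowerSlice_add_card_upperSlice (i := i) (A + B), lowerSlice_add, upperSlice_add]
  exact card_union_add_card_union_le _ _ _ _

lemma compress_subset_hamBall {r : ℕ} {A : Finset (F2 n)} (hA : A ⊆ hamBall n r) :
    compress i A ⊆ hamBall n r := by
  intro x hx
  simp only [compress, mem_union, mem_inter, mem_add_singleton_stdBasis, mem_lowerSlice,
    mem_upperSlice, add_stdBasis_add_stdBasis] at hx
  rcases hx with (⟨hx, -⟩ | ⟨hx, hxi⟩) | ⟨-, hx, -⟩
  · exact hA hx
  · have := mem_hamBall.mp (hA hx)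
    rw [hammingNorm_add_stdBasis hxi] at this
    exact mem_hamBall.mpr (by omega)
  · exact hA hx

end Compression

def totalWeight (S : Finset (F2 n)) : ℕ := ∑ x ∈ S, hammingNorm x

section Weight

variable {i : Fin n}

lemma totalWeight_eq_sum_lowerSlice_add_sum_upperSlice (S : Finset (F2 n)) :
    totalWeight S = ∑ x ∈ lowerSlice i S, hammingNorm x + ∑ x ∈ upperSlice i S, hammingNorm x +
      #(upperSlice i S) := by
  rw [totalWeight, sum_eq_sum_lowerSlice_add_sum_upperSlice (i := i), add_assoc, card_eq_sum_ones,
    ← sum_add_distrib]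
  congr 1
  exact sum_congr rfl fun x hx => hammingNorm_add_stdBasis (mem_upperSlice.mp hx).2

lemma totalWeight_compress_add_card_sdiff (A : Finset (F2 n)) :
    totalWeight (compress i A) + #(upperSlice i A \ lowerSlice i A) = totalWeight A := by
  rw [totalWeight_eq_sum_lowerSlice_add_sum_upperSlice (i := i) (compress i A), lowerSlice_compress,
    upperSlice_compress, totalWeight_eq_sum_lowerSlice_add_sum_upperSlice (i := i) A,
    sum_union_inter, inter_comm, add_assoc, card_inter_add_card_sdiff]

end Weight

lemma isDownset_iff_forall_upperSlice_subset_lowerSlice {A : Finset (F2 n)} :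
    IsDownset A ↔ ∀ i, upperSlice i A ⊆ lowerSlice i A := by
  simp only [IsDownset, subset_iff, mem_upperSlice, mem_lowerSlice]
  exact ⟨fun h i x hx => ⟨h x i hx.2 hx.1, hx.2⟩, fun h x i hx hxA => (h i ⟨hxA, hx⟩).1⟩

theorem exists_isDownset_card_add_le {r : ℕ} {A B : Finset (F2 n)} (hA : A ⊆ hamBall n r)
    (hB : B ⊆ hamBall n r) :
    ∃ A' B' : Finset (F2 n), A' ⊆ hamBall n r ∧ B' ⊆ hamBall n r ∧ IsDownset A' ∧
      #A' = #A ∧ #B' = #B ∧ #(A' + B') ≤ #(A + B) := by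
  induction hw : totalWeight A using Nat.strong_induction_on generalizing A B with
  | _ w ih =>
  by_cases hd : IsDownset A
  · exact ⟨A, B, hA, hB, hd, rfl, rfl, le_rfl⟩
  obtain ⟨i, hi⟩ : ∃ i, (upperSlice i A \ lowerSlice i A).Nonempty := by
    simpa [isDownset_iff_forall_upperSlice_subset_lowerSlice, sdiff_nonempty] using hd
  have hlt : totalWeight (compress i A) < w := by
    have := totalWeight_compress_add_card_sdiff (i := i) A
    have := hi.card_pos
    omega
  obtain ⟨A', B', hA', hB', hd', hcA, hcB, hsum⟩ :=
    ih _ hlt (compress_subset_hamBall hA) (compress_subset_hamBall hB) rfl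
  exact ⟨A', B', hA', hB', hd', hcA.trans (card_compress A), hcB.trans (card_compress B),
    hsum.trans (card_compress_add_compress_le A B)⟩

lemma IsDownset.mul_mem {A : Finset (F2 n)} (hA : IsDownset A) {a : F2 n} (ha : a ∈ A)
    (c : F2 n) : a * c ∈ A := by
  induction hw : hammingNorm a using Nat.strong_induction_on generalizing a with
  | _ w ih =>
  obtain hac | ⟨j, hj⟩ : a * c = a ∨ ∃ j, a j * c j ≠ a j := by
    by_contra! h
    exact h.1 (funext h.2)
  · rwa [hac]
  obtain ⟨haj, hcj⟩ : a j ≠ 0 ∧ c j = 0 := by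
    revert hj; generalize a j = s; generalize c j = t; revert s t; decide
  have ha'j : (a + stdBasis j) j = 0 := by simpa using haj
  have ha' : a + stdBasis j ∈ A := hA _ j ha'j (by simpa)
  have hlt : hammingNorm (a + stdBasis j) < w := by
    have := hammingNorm_add_stdBasis ha'j
    rw [add_stdBasis_add_stdBasis] at this
    omega
  have hc : (a + stdBasis j) * c = a * c := by
    rw [add_mul, stdBasis, ← Pi.single_mul_left, hcj, mul_zero, Pi.single_zero, add_zero]
  exact hc ▸ ih _ hlt ha' rfl

def coordOr (a b : F2 n) : F2 n := a + b + a * b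

lemma IsDownset.coordOr_mem_add {A B : Finset (F2 n)} (hA : IsDownset A) {a b : F2 n}
    (ha : a ∈ A) (hb : b ∈ B) : coordOr a b ∈ A + B := by
  have : coordOr a b = a * (1 + b) + b := by rw [coordOr]; ring
  exact this ▸ add_mem_add (hA.mul_mem ha _) hb

lemma card_filter_coordOr_eq (c : F2 n) :
    #{p : F2 n × F2 n | coordOr p.1 p.2 = c} = 3 ^ hammingNorm c := by
  have hfactor : ∀ s : ZMod 2,
      #{q : ZMod 2 × ZMod 2 | q.1 + q.2 + q.1 * q.2 = s} = if s = 0 then 1 else 3 := by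
    decide
  calc #{p : F2 n × F2 n | coordOr p.1 p.2 = c}
      = #(Fintype.piFinset fun j => {q : ZMod 2 × ZMod 2 | q.1 + q.2 + q.1 * q.2 = c j}) :=
        card_equiv (Equiv.arrowProdEquivProdArrow _ _ _).symm fun p => by
          simp [coordOr, funext_iff, Equiv.arrowProdEquivProdArrow]
    _ = ∏ j, if c j = 0 then 1 else 3 := by simp only [Fintype.card_piFinset, hfactor]
    _ = 3 ^ hammingNorm c := by simp [prod_ite, hammingNorm]

theorem IsDownset.card_mul_card_le {r : ℕ} {A B : Finset (F2 n)} (hd : IsDownset A)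
    (hA : A ⊆ hamBall n r) (hB : B ⊆ hamBall n r) : #A * #B ≤ 9 ^ r * #(A + B) := by
  rw [← card_product]
  refine card_le_mul_card_image_of_maps_to (f := fun p => coordOr p.1 p.2)
    (fun p hp => hd.coordOr_mem_add (mem_product.mp hp).1 (mem_product.mp hp).2) _ fun c hc => ?_
  obtain ⟨a, ha, b, hb, rfl⟩ := mem_add.mp hc
  have hab : hammingNorm (a + b) ≤ 2 * r := by
    have := hammingNorm_add_le a b
    have := mem_hamBall.mp (hA ha)
    have := mem_hamBall.mp (hB hb)
    omega
  calc #{p ∈ A ×ˢ B | coordOr p.1 p.2 = a + b}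
      ≤ #{p : F2 n × F2 n | coordOr p.1 p.2 = a + b} :=
        card_le_card (filter_subset_filter _ (subset_univ _))
    _ = 3 ^ hammingNorm (a + b) := card_filter_coordOr_eq _
    _ ≤ 3 ^ (2 * r) := Nat.pow_le_pow_right (by norm_num) hab
    _ = 9 ^ r := by rw [pow_mul]; norm_num

end

/-- Expansion in Hamming balls (Proposition 3.1): if `A, B ⊆ H_r(n)` then
`|A + B| ≥ 9^{-r} |A| |B|`. -/
theorem expansion_in_hamming_ball (n r : ℕ) (A B : Finset (F2 n))
    (hA : A ⊆ hamBall n r) (hB : B ⊆ hamBall n r) :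
    (9 : ℝ) ^ (-(r : ℤ)) * A.card * B.card ≤ ((A + B).card : ℝ) := by
  obtain ⟨A', B', hA', hB', hd, hcA, hcB, hsum⟩ := exists_isDownset_card_add_le hA hB
  have h : ((#A * #B : ℕ) : ℝ) ≤ ((9 ^ r * #(A + B) : ℕ) : ℝ) := by
    rw [← hcA, ← hcB]
    exact_mod_cast (hd.card_mul_card_le hA' hB').trans (Nat.mul_le_mul_left _ hsum)
  push_cast at h
  rw [zpow_neg, zpow_natCast, mul_assoc, inv_mul_le_iff₀ (by positivity)]
  exact h
end

section
/- Let n ≥ 0 and 0 ≤ r ≤ n be integers, and suppose A, A', A'' ⊆ F_2^n satisfy |A|·|A'|·|A''| ≥ (√5 + 2)^(−r)·2^(3n). Then A + A' + A'' contains a vector of Hamming norm at least n − r. -/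
open Finset Pointwise

namespace AuxExp

lemma sublemB' (s K v a b c d o1 o2 o3 : ℝ) (hs : s^2 = 5) (hs2 : 2 ≤ s)
    (hK : 0 ≤ K)
    (hv : K < v) (hvE : v ≤ (s+2)*K)
    (hva : v*a < K^2) (hvb : v*b < K^2) (hvc : v*c < K^2) (hvd : v^2*d < K^3)
    (ho1 : o1 < K) (ho2 : o2 < K) (ho3 : o3 < K) :
    v+a+b+c+d+o1+o2+o3 < 8*K := by
  have hv0 : 0 < v := lt_of_le_of_lt hK hv
  have f2 : 0 ≤ K^2 + 4*K*v - v^2 := by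
    nlinarith [mul_le_mul_of_nonneg_left hvE (mul_nonneg (by linarith : (0:ℝ) ≤ s - 2) hK),
      mul_le_mul_of_nonneg_left hvE hv0.le]
  have key : v^3 + 3*K^2*v + K^3 + 3*K*v^2 ≤ 8*K*v^2 := by
    nlinarith [mul_nonneg (sub_nonneg.2 hv.le) f2]
  have h2 : (v+a+b+c+d+o1+o2+o3)*v^2 < 8*K*v^2 := by
    nlinarith [mul_lt_mul_of_pos_right hva hv0, mul_lt_mul_of_pos_right hvb hv0,
      mul_lt_mul_of_pos_right hvc hv0,
      mul_lt_mul_of_pos_right ho1 (mul_pos hv0 hv0),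
      mul_lt_mul_of_pos_right ho2 (mul_pos hv0 hv0),
      mul_lt_mul_of_pos_right ho3 (mul_pos hv0 hv0)]
  exact lt_of_mul_lt_mul_right h2 (by positivity)

lemma mul2_lt {x y K : ℝ} (hx : 0 ≤ x) (hy : 0 ≤ y) (h1 : x < K) (h2 : y < K) :
    x*y < K^2 := by nlinarith

lemma mul3_lt {x y z K : ℝ} (hx : 0 ≤ x) (hy : 0 ≤ y) (hz : 0 ≤ z)
    (h1 : x < K) (h2 : y < K) (h3 : z < K) : x*y*z < K^3 := by
  nlinarith [mul2_lt hx hy h1 h2, mul_nonneg hx hy]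

lemma keylemma (K p q p' q' p'' q'' : ℝ) (hK : 0 ≤ K)
    (hp : 0 ≤ p) (hq : 0 ≤ q) (hp' : 0 ≤ p') (hq' : 0 ≤ q') (hp'' : 0 ≤ p'') (hq'' : 0 ≤ q'')
    (hV1 : p*p'*p'' < (Real.sqrt 5+2)*K) (hV2 : p*q'*q'' < (Real.sqrt 5+2)*K)
    (hV3 : q*p'*q'' < (Real.sqrt 5+2)*K) (hV4 : q*q'*p'' < (Real.sqrt 5+2)*K)
    (hO1 : p*p'*q'' < K) (hO2 : p*q'*p'' < K) (hO3 : q*p'*p'' < K) (hO4 : q*q'*q'' < K) :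
    (p+q)*(p'+q')*(p''+q'') < 8*K := by
  set s := Real.sqrt 5 with hsdef
  have hs : s^2 = 5 := Real.sq_sqrt (by norm_num)
  have hs2 : 2 ≤ s := by
    nlinarith [Real.sqrt_nonneg 5, hs]
  have nO1 : 0 ≤ p*p'*q'' := by positivity
  have nO2 : 0 ≤ p*q'*p'' := by positivity
  have nO3 : 0 ≤ q*p'*p'' := by positivity
  have nO4 : 0 ≤ q*q'*q'' := by positivity
  have expand : (p+q)*(p'+q')*(p''+q'') =
      p*p'*p'' + p*q'*q'' + q*p'*q'' + q*q'*p'' + (p*p'*q'' + p*q'*p'' + q*p'*p'' + q*q'*q'') := by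
    ring
  rw [expand]
  rcases lt_or_ge K (p*p'*p'') with h1 | h1
  · have := sublemB' s K (p*p'*p'') (p*q'*q'') (q*p'*q'') (q*q'*p'') (q*q'*q'')
      (p*p'*q'') (p*q'*p'') (q*p'*p'') hs hs2 hK h1 hV1.le
      (by rw [show (p*p'*p'')*(p*q'*q'') = (p*p'*q'')*(p*q'*p'') by ring]; exact mul2_lt nO1 nO2 hO1 hO2)
      (by rw [show (p*p'*p'')*(q*p'*q'') = (p*p'*q'')*(q*p'*p'') by ring]; exact mul2_lt nO1 nO3 hO1 hO3)
      (by rw [show (p*p'*p'')*(q*q'*p'') = (p*q'*p'')*(q*p'*p'') by ring]; exact mul2_lt nO2 nO3 hO2 hO3)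
      (by rw [show (p*p'*p'')^2*(q*q'*q'') = (p*p'*q'')*(p*q'*p'')*(q*p'*p'') by ring]; exact mul3_lt nO1 nO2 nO3 hO1 hO2 hO3)
      hO1 hO2 hO3
    linarith
  rcases lt_or_ge K (p*q'*q'') with h2 | h2
  · have := sublemB' s K (p*q'*q'') (p*p'*p'') (q*p'*q'') (q*q'*p'') (q*p'*p'')
      (p*p'*q'') (p*q'*p'') (q*q'*q'') hs hs2 hK h2 hV2.le
      (by rw [show (p*q'*q'')*(p*p'*p'') = (p*p'*q'')*(p*q'*p'') by ring]; exact mul2_lt nO1 nO2 hO1 hO2)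
      (by rw [show (p*q'*q'')*(q*p'*q'') = (p*p'*q'')*(q*q'*q'') by ring]; exact mul2_lt nO1 nO4 hO1 hO4)
      (by rw [show (p*q'*q'')*(q*q'*p'') = (p*q'*p'')*(q*q'*q'') by ring]; exact mul2_lt nO2 nO4 hO2 hO4)
      (by rw [show (p*q'*q'')^2*(q*p'*p'') = (p*p'*q'')*(p*q'*p'')*(q*q'*q'') by ring]; exact mul3_lt nO1 nO2 nO4 hO1 hO2 hO4)
      hO1 hO2 hO4
    linarith
  rcases lt_or_ge K (q*p'*q'') with h3 | h3
  · have := sublemB' s K (q*p'*q'') (p*p'*p'') (p*q'*q'') (q*q'*p'') (p*q'*p'')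
      (p*p'*q'') (q*p'*p'') (q*q'*q'') hs hs2 hK h3 hV3.le
      (by rw [show (q*p'*q'')*(p*p'*p'') = (p*p'*q'')*(q*p'*p'') by ring]; exact mul2_lt nO1 nO3 hO1 hO3)
      (by rw [show (q*p'*q'')*(p*q'*q'') = (p*p'*q'')*(q*q'*q'') by ring]; exact mul2_lt nO1 nO4 hO1 hO4)
      (by rw [show (q*p'*q'')*(q*q'*p'') = (q*p'*p'')*(q*q'*q'') by ring]; exact mul2_lt nO3 nO4 hO3 hO4)
      (by rw [show (q*p'*q'')^2*(p*q'*p'') = (p*p'*q'')*(q*p'*p'')*(q*q'*q'') by ring]; exact mul3_lt nO1 nO3 nO4 hO1 hO3 hO4)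
      hO1 hO3 hO4
    linarith
  rcases lt_or_ge K (q*q'*p'') with h4 | h4
  · have := sublemB' s K (q*q'*p'') (p*p'*p'') (p*q'*q'') (q*p'*q'') (p*p'*q'')
      (p*q'*p'') (q*p'*p'') (q*q'*q'') hs hs2 hK h4 hV4.le
      (by rw [show (q*q'*p'')*(p*p'*p'') = (p*q'*p'')*(q*p'*p'') by ring]; exact mul2_lt nO2 nO3 hO2 hO3)
      (by rw [show (q*q'*p'')*(p*q'*q'') = (p*q'*p'')*(q*q'*q'') by ring]; exact mul2_lt nO2 nO4 hO2 hO4)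
      (by rw [show (q*q'*p'')*(q*p'*q'') = (q*p'*p'')*(q*q'*q'') by ring]; exact mul2_lt nO3 nO4 hO3 hO4)
      (by rw [show (q*q'*p'')^2*(p*p'*q'') = (p*q'*p'')*(q*p'*p'')*(q*q'*q'') by ring]; exact mul3_lt nO2 nO3 nO4 hO2 hO3 hO4)
      hO2 hO3 hO4
    linarith
  linarith

def fib {n : ℕ} (A : Finset (F2 (n+1))) (b : ZMod 2) : Finset (F2 n) :=
  (A.filter (fun x => x (Fin.last n) = b)).image Fin.init

lemma mem_fib {n : ℕ} {A : Finset (F2 (n+1))} {b : ZMod 2} {y : F2 n} :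
    y ∈ fib A b ↔ (Fin.snoc y b : F2 (n+1)) ∈ A := by
  constructor
  · rintro hy
    simp only [fib, mem_image, mem_filter] at hy
    obtain ⟨x, ⟨hxA, hxb⟩, rfl⟩ := hy
    rwa [← hxb, Fin.snoc_init_self]
  · intro hx
    simp only [fib, mem_image, mem_filter]
    exact ⟨Fin.snoc y b, ⟨hx, Fin.snoc_last _ _⟩, Fin.init_snoc _ _⟩

lemma card_fib {n : ℕ} (A : Finset (F2 (n+1))) :
    (fib A 0).card + (fib A 1).card = A.card := by
  have key : ∀ b : ZMod 2, (fib A b).card = (A.filter (fun x => x (Fin.last n) = b)).card := by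
    intro b
    apply Finset.card_image_of_injOn
    intro x hx y hy hxy
    simp only [mem_coe, mem_filter] at hx hy
    have : (Fin.snoc (Fin.init x) (x (Fin.last n)) : F2 (n+1)) =
        Fin.snoc (Fin.init y) (y (Fin.last n)) := by
      rw [hxy, hx.2, hy.2]
    rwa [Fin.snoc_init_self, Fin.snoc_init_self] at this
  rw [key 0, key 1]
  have hiff : ∀ a : ZMod 2, a = 1 ↔ ¬ a = 0 := by decide
  have hfe : A.filter (fun x => x (Fin.last n) = 1) = A.filter (fun x => ¬ (x (Fin.last n) = 0)) := by
    apply Finset.filter_congr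
    intro x _
    exact hiff (x (Fin.last n))
  rw [hfe]
  exact Finset.card_filter_add_card_filter_not (p := fun x : F2 (n+1) => x (Fin.last n) = 0)

lemma snoc_add {n : ℕ} (y y' : F2 n) (b b' : ZMod 2) :
    (Fin.snoc y b : F2 (n+1)) + Fin.snoc y' b' = Fin.snoc (y + y') (b + b') := by
  funext i
  refine Fin.lastCases ?_ ?_ i
  · simp [Fin.snoc_last]
  · intro j
    simp [Fin.snoc_castSucc]

lemma norm_snoc {n : ℕ} (y : F2 n) (b : ZMod 2) :
    hammingNorm (Fin.snoc y b : F2 (n+1)) = hammingNorm y + (if b = 0 then 0 else 1) := by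
  unfold hammingNorm
  rw [Finset.card_filter, Finset.card_filter, Fin.sum_univ_castSucc]
  simp [Fin.snoc_castSucc, Fin.snoc_last]

lemma card_le {n : ℕ} (A : Finset (F2 n)) : A.card ≤ 2 ^ n := by
  calc A.card ≤ (Finset.univ : Finset (F2 n)).card := Finset.card_le_card (Finset.subset_univ A)
  _ = 2 ^ n := by simp [Finset.card_univ]

lemma fib_sum_mem {n : ℕ} {A A' A'' : Finset (F2 (n+1))} {b b' b'' : ZMod 2} {y : F2 n}
    (hy : y ∈ fib A b + fib A' b' + fib A'' b'') :
    (Fin.snoc y (b + b' + b'') : F2 (n+1)) ∈ A + A' + A'' := by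
  rw [Finset.mem_add] at hy
  obtain ⟨z, hz, w, hw, rfl⟩ := hy
  rw [Finset.mem_add] at hz
  obtain ⟨u, hu, v, hv, rfl⟩ := hz
  rw [mem_fib] at hu hv hw
  rw [← snoc_add, ← snoc_add]
  exact Finset.add_mem_add (Finset.add_mem_add hu hv) hw

lemma bound_pos (n : ℕ) (r : ℕ) : 0 < (Real.sqrt 5 + 2) ^ (-(r : ℤ)) * 2 ^ (3 * n) := by
  have h5 : (0:ℝ) < Real.sqrt 5 + 2 := by positivity
  positivity

lemma nonempty_of_h {n r : ℕ} {A A' A'' : Finset (F2 n)}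
    (h : (Real.sqrt 5 + 2) ^ (-(r : ℤ)) * 2 ^ (3 * n) ≤ (A.card : ℝ) * A'.card * A''.card) :
    A.Nonempty ∧ A'.Nonempty ∧ A''.Nonempty := by
  have hpos := bound_pos n r
  refine ⟨?_, ?_, ?_⟩ <;>
  · rw [← Finset.card_pos]
    by_contra hc
    push_neg at hc
    have h0 : _ = 0 := Nat.le_zero.mp hc
    rw [h0] at h
    simp only [Nat.cast_zero, zero_mul, mul_zero] at h
    linarith [hpos]

lemma main_ind : ∀ n : ℕ, ∀ r : ℕ, r ≤ n → ∀ A A' A'' : Finset (F2 n),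
    (Real.sqrt 5 + 2) ^ (-(r : ℤ)) * 2 ^ (3 * n) ≤ (A.card : ℝ) * A'.card * A''.card →
    ∃ x ∈ A + A' + A'', n - r ≤ hammingNorm x := by
  intro n
  induction n with
  | zero =>
    intro r hr A A' A'' h
    obtain ⟨hA, hA', hA''⟩ := nonempty_of_h h
    obtain ⟨x, hx⟩ := (hA.add hA').add hA''
    exact ⟨x, hx, by omega⟩
  | succ n IH =>
    intro r hr A A' A'' h
    by_contra hcon
    push_neg at hcon
    obtain ⟨hA, hA', hA''⟩ := nonempty_of_h h
    rcases Nat.lt_or_ge r (n+1) with hrn | hrn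
    swap
    · obtain ⟨x, hx⟩ := (hA.add hA').add hA''
      have := hcon x hx
      omega
    have hrn' : r ≤ n := by omega
    have hS : ∀ x ∈ A + A' + A'', hammingNorm x ≤ n - r := by
      intro x hx
      have := hcon x hx
      omega
    have hsqpos : (0:ℝ) < Real.sqrt 5 + 2 := by positivity
    set K : ℝ := (Real.sqrt 5 + 2) ^ (-(r : ℤ)) * 2 ^ (3 * n) with hKdef
    have hKpos : 0 < K := bound_pos n r
    -- the step lemma
    have step : ∀ b b' b'' : ZMod 2, ∀ r' : ℕ, r' ≤ n →
        (n + 1 - r ≤ n - r' + (if b + b' + b'' = 0 then 0 else 1)) →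
        ((fib A b).card : ℝ) * (fib A' b').card * (fib A'' b'').card <
          (Real.sqrt 5 + 2) ^ (-(r' : ℤ)) * 2 ^ (3 * n) := by
      intro b b' b'' r' hr' hpar
      by_contra hge
      push_neg at hge
      obtain ⟨y, hy, hny⟩ := IH r' hr' (fib A b) (fib A' b') (fib A'' b'') hge
      have hx := fib_sum_mem hy
      have hnorm := norm_snoc y (b + b' + b'')
      have hle := hS _ hx
      set e : ℕ := if b + b' + b'' = 0 then 0 else 1
      omega
    -- odd bounds
    have hO1 := step 0 0 1 r hrn' (by rw [if_neg (by decide)]; omega)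
    have hO2 := step 0 1 0 r hrn' (by rw [if_neg (by decide)]; omega)
    have hO3 := step 1 0 0 r hrn' (by rw [if_neg (by decide)]; omega)
    have hO4 := step 1 1 1 r hrn' (by rw [if_neg (by decide)]; omega)
    -- even bounds
    have hEven : ∀ b b' b'' : ZMod 2, b + b' + b'' = 0 →
        ((fib A b).card : ℝ) * (fib A' b').card * (fib A'' b'').card < (Real.sqrt 5 + 2) * K := by
      intro b b' b'' hpar
      rcases Nat.eq_zero_or_pos r with hr0 | hr1
      · subst hr0
        have h1 : ((fib A b).card : ℝ) * (fib A' b').card * (fib A'' b'').card ≤ 2 ^ (3 * n) := by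
          have c1 := card_le (fib A b)
          have c2 := card_le (fib A' b')
          have c3 := card_le (fib A'' b'')
          have c1' : ((fib A b).card : ℝ) ≤ 2 ^ n := by exact_mod_cast c1
          have c2' : ((fib A' b').card : ℝ) ≤ 2 ^ n := by exact_mod_cast c2
          have c3' : ((fib A'' b'').card : ℝ) ≤ 2 ^ n := by exact_mod_cast c3
          have e1 : (2:ℝ) ^ (3 * n) = 2 ^ n * 2 ^ n * 2 ^ n := by
            rw [show 3 * n = n + n + n by ring, pow_add, pow_add]
          rw [e1]
          gcongr <;> positivity
        have hK0 : K = 2 ^ (3 * n) := by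
          rw [hKdef]
          norm_num
        rw [hK0]
        nlinarith [h1, pow_pos (show (0:ℝ) < 2 by norm_num) (3 * n), Real.sqrt_nonneg 5]
      · have hb := step b b' b'' (r - 1) (by omega) (by rw [if_pos hpar]; omega)
        have heq : (Real.sqrt 5 + 2) ^ (-((r - 1 : ℕ) : ℤ)) * 2 ^ (3 * n) = (Real.sqrt 5 + 2) * K := by
          rw [hKdef, show (-((r - 1 : ℕ) : ℤ)) = 1 + (-(r : ℤ)) by omega, zpow_add₀ (ne_of_gt hsqpos),
            zpow_one]
          ring
        rw [heq] at hb
        exact hb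
    have hV1 := hEven 0 0 0 (by decide)
    have hV2 := hEven 0 1 1 (by decide)
    have hV3 := hEven 1 0 1 (by decide)
    have hV4 := hEven 1 1 0 (by decide)
    -- assemble
    have hcA : (A.card : ℝ) = ((fib A 0).card : ℝ) + ((fib A 1).card : ℝ) := by
      rw [← card_fib A]; push_cast; ring
    have hcA' : (A'.card : ℝ) = ((fib A' 0).card : ℝ) + ((fib A' 1).card : ℝ) := by
      rw [← card_fib A']; push_cast; ring
    have hcA'' : (A''.card : ℝ) = ((fib A'' 0).card : ℝ) + ((fib A'' 1).card : ℝ) := by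
      rw [← card_fib A'']; push_cast; ring
    have hfinal := keylemma K ((fib A 0).card) ((fib A 1).card) ((fib A' 0).card)
      ((fib A' 1).card) ((fib A'' 0).card) ((fib A'' 1).card) hKpos.le
      (Nat.cast_nonneg _) (Nat.cast_nonneg _) (Nat.cast_nonneg _) (Nat.cast_nonneg _)
      (Nat.cast_nonneg _) (Nat.cast_nonneg _)
      hV1 hV2 hV3 hV4 hO1 hO2 hO3 hO4
    have hbig : (Real.sqrt 5 + 2) ^ (-(r : ℤ)) * 2 ^ (3 * (n+1)) = 8 * K := by
      rw [hKdef, show 3 * (n+1) = 3 * n + 3 by ring, pow_add]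
      ring
    rw [hcA, hcA', hcA''] at h
    rw [hbig] at h
    linarith

end AuxExp


/-- Expansion out of Hamming balls (Proposition 3.2): if
`|A||A'||A''| ≥ (√5 + 2)^{-r} 2^{3n}` then `A + A' + A''` contains a vector
with at least `n - r` ones. -/
theorem expansion_out_of_hamming_ball (n r : ℕ) (hr : r ≤ n)
    (A A' A'' : Finset (F2 n))
    (h : (Real.sqrt 5 + 2) ^ (-(r : ℤ)) * 2 ^ (3 * n) ≤
      (A.card : ℝ) * A'.card * A''.card) :
    ∃ x ∈ A + A' + A'', n - r ≤ hammingNorm x :=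
  AuxExp.main_ind n r hr A A' A'' h
end

section
/- Let n ≥ 0 and 0 ≤ r ≤ n be integers, and let A, A', A'' ⊆ F_2^n. Then |A + A' + A'' + H_r(n)| ≥ min( (1/2)·(2 + √5)^(r/3)·(|A|·|A'|·|A''|)^(1/3), 2^n ). -/
open Finset Pointwise

namespace ExpansionAux

/-! ### The golden ratio and the bound function -/

noncomputable def phi : ℝ := (1 + Real.sqrt 5) / 2

lemma sqrt5_sq : Real.sqrt 5 * Real.sqrt 5 = 5 := Real.mul_self_sqrt (by norm_num)

lemma phi_gt_one : 1 < phi := by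
  have h : (2:ℝ) < Real.sqrt 5 := by nlinarith [sqrt5_sq, Real.sqrt_nonneg 5]
  unfold phi; linarith

lemma phi_pos : 0 < phi := lt_trans one_pos phi_gt_one

lemma phi_sq : phi ^ 2 = phi + 1 := by
  unfold phi; field_simp; nlinarith [sqrt5_sq]

/-- The bound function `(1/2) φ^r p^{1/3}`. -/
noncomputable def bnd (r : ℕ) (p : ℝ) : ℝ := (1/2) * phi ^ r * p ^ ((1:ℝ)/3)

lemma bnd_nonneg (r : ℕ) {p : ℝ} (hp : 0 ≤ p) : 0 ≤ bnd r p := by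
  unfold bnd
  have := phi_pos
  positivity

lemma bnd_zero (r : ℕ) : bnd r 0 = 0 := by
  unfold bnd
  rw [Real.zero_rpow (by norm_num), mul_zero]

lemma bnd_mono (r : ℕ) {p q : ℝ} (hp : 0 ≤ p) (hpq : p ≤ q) : bnd r p ≤ bnd r q := by
  unfold bnd
  have h1 : (0:ℝ) ≤ 1/2 * phi ^ r := by have := phi_pos; positivity
  exact mul_le_mul_of_nonneg_left (Real.rpow_le_rpow hp hpq (by norm_num)) h1

lemma bnd_cube (r : ℕ) {M : ℝ} (hM : 0 ≤ M) : bnd 0 (M^3) ≤ M := by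
  unfold bnd
  rw [pow_zero, mul_one, ← Real.rpow_natCast M 3, ← Real.rpow_mul hM]
  norm_num
  linarith

lemma rpow_cube {m : ℝ} (hm : 0 ≤ m) : (m ^ ((1:ℝ)/3)) ^ (3:ℕ) = m := by
  rw [← Real.rpow_natCast (m ^ ((1:ℝ)/3)) 3, ← Real.rpow_mul hm]
  norm_num

/-! ### The core real inequality -/

/-- The core real inequality for the induction step. -/
lemma core (T c s₀ s₁ t : ℝ) (hT : 0 ≤ T) (ht0 : 0 ≤ t) (ht1 : t ≤ 1) (hc : 0 < c)
    (h0 : min T c ≤ s₀) (h1 : min (T * (phi - 1)) c ≤ s₁) (h2 : min (T * t) c ≤ s₁) :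
    min (T * (1 + t ^ 3)) (2 * c) ≤ s₀ + s₁ := by
  have hphi := phi_sq
  have hphi1 := phi_gt_one
  by_cases hTc : T ≤ c
  · -- main uncapped case
    have hs0 : T ≤ s₀ := by rwa [min_eq_left hTc] at h0
    have hTt : T * t ≤ c := le_trans (by nlinarith) hTc
    have hs1 : T * t ≤ s₁ := by rwa [min_eq_left hTt] at h2
    have : T * (1 + t ^ 3) ≤ T + T * t := by
      nlinarith [mul_nonneg hT (mul_nonneg (mul_nonneg ht0 (sub_nonneg.2 ht1))
        (by linarith : (0:ℝ) ≤ 1 + t))]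
    exact le_trans (min_le_left _ _) (by linarith)
  · push_neg at hTc
    have hs0 : c ≤ s₀ := by rwa [min_eq_right hTc.le] at h0
    by_cases h1c : c ≤ T * (phi - 1)
    · have hs1 : c ≤ s₁ := by rwa [min_eq_right h1c] at h1
      exact le_trans (min_le_right _ _) (by linarith)
    · push_neg at h1c
      by_cases h2c : c ≤ T * t
      · have hs1 : c ≤ s₁ := by rwa [min_eq_right h2c] at h2
        exact le_trans (min_le_right _ _) (by linarith)
      · push_neg at h2c
        have hs1a : T * (phi - 1) ≤ s₁ := by rwa [min_eq_left h1c.le] at h1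
        have hs1b : T * t ≤ s₁ := by rwa [min_eq_left h2c.le] at h2
        refine le_trans (min_le_left _ _) ?_
        by_cases ht : t ≤ phi - 1
        · -- t³ ≤ (phi-1)³ = 2phi - 3
          have hcube : t ^ 3 ≤ (phi - 1) ^ 3 := pow_le_pow_left₀ ht0 ht 3
          have hval : (phi - 1) ^ 3 = 2 * phi - 3 := by nlinarith
          nlinarith
        · push_neg at ht
          have hq : t ^ 2 + t - 1 ≥ 0 := by
            nlinarith [mul_nonneg (sub_nonneg.2 ht.le) (by positivity : (0:ℝ) ≤ t + phi)]
          have hkey : T * t - T * t ^ 3 ≥ T * (1 - t) := by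
            have : T * (1 - t) * (t ^ 2 + t - 1) ≥ 0 :=
              mul_nonneg (mul_nonneg hT (by linarith)) hq
            nlinarith
          linarith

/-! ### The assembly inequality -/

lemma assemble (r' n : ℕ) (x0 x1 y0 y1 z0 z1 s0 s1 : ℝ)
    (hx0 : 1 ≤ x0) (hy0 : 1 ≤ y0) (hz0 : 1 ≤ z0)
    (hx1 : 0 ≤ x1) (hy1 : 0 ≤ y1) (hz1 : 0 ≤ z1)
    (hx10 : x1 ≤ x0) (hy10 : y1 ≤ y0) (hz10 : z1 ≤ z0)
    (h0 : min (bnd (r'+1) (x0*y0*z0)) ((2:ℝ)^n) ≤ s0)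
    (h1 : min (bnd r' (x0*y0*z0)) ((2:ℝ)^n) ≤ s1)
    (h2b : min (bnd (r'+1) (x1*y0*z0)) ((2:ℝ)^n) ≤ s1)
    (h2c : min (bnd (r'+1) (x0*y1*z0)) ((2:ℝ)^n) ≤ s1)
    (h2d : min (bnd (r'+1) (x0*y0*z1)) ((2:ℝ)^n) ≤ s1) :
    min (bnd (r'+1) ((x0+x1)*(y0+y1)*(z0+z1))) ((2:ℝ)^(n+1)) ≤ s0 + s1 := by
  have hx0' : (0:ℝ) < x0 := lt_of_lt_of_le one_pos hx0
  have hy0' : (0:ℝ) < y0 := lt_of_lt_of_le one_pos hy0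
  have hz0' : (0:ℝ) < z0 := lt_of_lt_of_le one_pos hz0
  set a3 : ℝ := x0*y0*z0 with ha3e
  have ha3 : 0 < a3 := by positivity
  set q : ℝ := max (x1*y0*z0) (max (x0*y1*z0) (x0*y0*z1)) with hqe
  have hq0 : 0 ≤ q := le_trans (by positivity) (le_max_left _ _)
  have hqa : q ≤ a3 := by
    refine max_le ?_ (max_le ?_ ?_) <;> rw [ha3e]
    · exact mul_le_mul_of_nonneg_right (mul_le_mul_of_nonneg_right hx10 hy0'.le) hz0'.le
    · exact mul_le_mul_of_nonneg_right (mul_le_mul_of_nonneg_left hy10 hx0'.le) hz0'.le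
    · exact mul_le_mul_of_nonneg_left hz10 (by positivity)
  set m : ℝ := q / a3 with hme
  have hm0 : 0 ≤ m := div_nonneg hq0 ha3.le
  have hm1 : m ≤ 1 := by rw [hme]; exact div_le_one_of_le₀ hqa ha3.le
  have hma : m * a3 = q := by rw [hme]; field_simp
  set t : ℝ := m ^ ((1:ℝ)/3) with hte
  have ht0 : 0 ≤ t := Real.rpow_nonneg hm0 _
  have ht1 : t ≤ 1 := Real.rpow_le_one hm0 hm1 (by norm_num)
  have ht3 : t ^ (3:ℕ) = m := rpow_cube hm0
  set T : ℝ := bnd (r'+1) a3 with hTe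
  have hT0 : 0 ≤ T := bnd_nonneg _ ha3.le
  have hTphi : T * (phi - 1) = bnd r' a3 := by
    rw [hTe]; unfold bnd; rw [pow_succ]
    linear_combination (1/2 * a3 ^ ((1:ℝ)/3) * phi ^ r') * phi_sq
  have hTt : T * t = bnd (r'+1) q := by
    rw [hTe, hte]; unfold bnd
    rw [mul_assoc, ← Real.mul_rpow ha3.le hm0, hme, mul_div_cancel₀ _ (ne_of_gt ha3)]
  have h1' : min (T * (phi - 1)) ((2:ℝ)^n) ≤ s1 := by rw [hTphi]; exact h1
  have h2' : min (T * t) ((2:ℝ)^n) ≤ s1 := by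
    rw [hTt]
    rcases max_choice (x1*y0*z0) (max (x0*y1*z0) (x0*y0*z1)) with h | h
    · rw [hqe, h]; exact h2b
    · rcases max_choice (x0*y1*z0) (x0*y0*z1) with h2 | h2
      · rw [hqe, h, h2]; exact h2c
      · rw [hqe, h, h2]; exact h2d
  have hcore := core T ((2:ℝ)^n) s0 s1 t hT0 ht0 ht1 (by positivity) h0 h1' h2'
  have hx1m : x1 ≤ m * x0 := by
    have key : x1 * (y0 * z0) ≤ (m * x0) * (y0 * z0) := by
      have h5 : x1*y0*z0 ≤ q := le_max_left _ _
      have h6 : (m * x0) * (y0 * z0) = m * a3 := by rw [ha3e]; ring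
      rw [h6, hma]
      exact le_trans (le_of_eq (by ring)) h5
    exact le_of_mul_le_mul_right key (by positivity)
  have hy1m : y1 ≤ m * y0 := by
    have key : y1 * (x0 * z0) ≤ (m * y0) * (x0 * z0) := by
      have h5 : x0*y1*z0 ≤ q := le_trans (le_max_left _ _) (le_max_right _ _)
      have h6 : (m * y0) * (x0 * z0) = m * a3 := by rw [ha3e]; ring
      rw [h6, hma]
      exact le_trans (le_of_eq (by ring)) h5
    exact le_of_mul_le_mul_right key (by positivity)
  have hz1m : z1 ≤ m * z0 := by
    have key : z1 * (x0 * y0) ≤ (m * z0) * (x0 * y0) := by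
      have h5 : x0*y0*z1 ≤ q := le_trans (le_max_right _ _) (le_max_right _ _)
      have h6 : (m * z0) * (x0 * y0) = m * a3 := by rw [ha3e]; ring
      rw [h6, hma]
      exact le_trans (le_of_eq (by ring)) h5
    exact le_of_mul_le_mul_right key (by positivity)
  have hPle : (x0+x1)*(y0+y1)*(z0+z1) ≤ a3 * (1+m)^3 := by
    have e1 : x0+x1 ≤ x0*(1+m) := by
      have : x0*(1+m) = x0 + m*x0 := by ring
      linarith
    have e2 : y0+y1 ≤ y0*(1+m) := by
      have : y0*(1+m) = y0 + m*y0 := by ring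
      linarith
    have e3 : z0+z1 ≤ z0*(1+m) := by
      have : z0*(1+m) = z0 + m*z0 := by ring
      linarith
    have p1 : (x0+x1)*(y0+y1) ≤ (x0*(1+m))*(y0*(1+m)) :=
      mul_le_mul e1 e2 (by positivity) (by positivity)
    have p2 : (x0+x1)*(y0+y1)*(z0+z1) ≤ (x0*(1+m))*(y0*(1+m))*(z0*(1+m)) :=
      mul_le_mul p1 e3 (by positivity) (by positivity)
    refine le_trans p2 (le_of_eq ?_)
    rw [ha3e]; ring
  have hbndP : bnd (r'+1) ((x0+x1)*(y0+y1)*(z0+z1)) ≤ T * (1 + t^3) := by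
    rw [ht3]
    calc bnd (r'+1) ((x0+x1)*(y0+y1)*(z0+z1)) ≤ bnd (r'+1) (a3*(1+m)^3) :=
          bnd_mono _ (by positivity) hPle
      _ = T * (1+m) := by
          rw [hTe]; unfold bnd
          rw [Real.mul_rpow ha3.le (by positivity)]
          have h3 : (((1+m)^3 : ℝ)) ^ ((1:ℝ)/3) = 1+m := by
            rw [← Real.rpow_natCast (1+m) 3, ← Real.rpow_mul (by positivity)]
            norm_num
          rw [h3]; ring
  refine le_trans (min_le_min hbndP (le_of_eq (by ring))) hcore

/-! ### Slices of the cube -/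

variable {n : ℕ}

/-- The slice of `X ⊆ F_2^{n+1}` where the last coordinate equals `ε`,
viewed inside `F_2^n`. -/
def slice (ε : ZMod 2) (X : Finset (F2 (n+1))) : Finset (F2 n) :=
  Finset.univ.filter fun x => Fin.snoc x ε ∈ X

@[simp] lemma mem_slice {ε : ZMod 2} {X : Finset (F2 (n+1))} {x : F2 n} :
    x ∈ slice ε X ↔ Fin.snoc x ε ∈ X := by simp [slice]

lemma snoc_add (a b : F2 n) (ε δ : ZMod 2) :
    (Fin.snoc a ε + Fin.snoc b δ : F2 (n+1)) = Fin.snoc (a + b) (ε + δ) := by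
  funext i
  induction i using Fin.lastCases with
  | last => simp
  | cast i => simp

lemma zmod2_cases (a : ZMod 2) : a = 0 ∨ a = 1 := by revert a; decide
lemma zmod2_add_self (a : ZMod 2) : a + a = 0 := by revert a; decide
lemma f2_add_self (x : F2 n) : x + x = 0 := by funext i; exact zmod2_add_self _

lemma card_slice (ε : ZMod 2) (X : Finset (F2 (n+1))) :
    (slice ε X).card = (X.filter fun x => x (Fin.last n) = ε).card := by
  apply Finset.card_bij' (fun x _ => Fin.snoc x ε)
    (fun (x : F2 (n+1)) _ => (fun i => x i.castSucc : F2 n))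
  · intro a ha; simp at ha; simp [ha]
  · intro a ha
    simp only [Finset.mem_filter] at ha
    simp only [mem_slice]
    have : (Fin.snoc (fun i => a i.castSucc) ε : F2 (n+1)) = a := by
      rw [← ha.2]; exact Fin.snoc_init_self a
    rw [this]; exact ha.1
  · intro a _; funext i; simp
  · intro a ha
    simp only [Finset.mem_filter] at ha
    rw [← ha.2]; exact Fin.snoc_init_self a

lemma card_eq_slices (X : Finset (F2 (n+1))) :
    X.card = (slice 0 X).card + (slice 1 X).card := by
  rw [card_slice, card_slice, ← Finset.card_union_of_disjoint, Finset.filter_union_right]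
  · rw [Finset.filter_true_of_mem]
    intro x _
    rcases zmod2_cases (x (Fin.last n)) with h | h <;> simp [h]
  · rw [Finset.disjoint_filter]
    intro x _ h0 h1
    rw [h0] at h1; exact one_ne_zero h1.symm

lemma slice_add (ε δ : ZMod 2) (X Y : Finset (F2 (n+1))) :
    slice ε X + slice δ Y ⊆ slice (ε + δ) (X + Y) := by
  intro z hz
  rw [Finset.mem_add] at hz
  obtain ⟨a, ha, b, hb, rfl⟩ := hz
  rw [mem_slice] at ha hb ⊢
  rw [← snoc_add]
  exact Finset.add_mem_add ha hb

lemma slice_add4 (ε₁ ε₂ ε₃ ε₄ : ZMod 2) (X Y Z W : Finset (F2 (n+1))) :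
    slice ε₁ X + slice ε₂ Y + slice ε₃ Z + slice ε₄ W ⊆
      slice (ε₁ + ε₂ + ε₃ + ε₄) (X + Y + Z + W) := by
  refine subset_trans (Finset.add_subset_add ?_ (subset_refl _)) (slice_add _ _ _ _)
  refine subset_trans (Finset.add_subset_add ?_ (subset_refl _)) (slice_add _ _ _ _)
  exact slice_add _ _ _ _

/-! ### Hamming balls -/

@[simp] lemma mem_hamBall {r : ℕ} {x : F2 n} : x ∈ hamBall n r ↔ hammingNorm x ≤ r := by
  simp [hamBall]

lemma hammingNorm_snoc (x : F2 n) (ε : ZMod 2) :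
    hammingNorm (Fin.snoc x ε : F2 (n+1)) = hammingNorm x + if ε ≠ 0 then 1 else 0 := by
  unfold hammingNorm
  rw [Finset.card_filter, Finset.card_filter, Fin.sum_univ_castSucc]
  simp

lemma slice_hamBall_zero (r : ℕ) : slice 0 (hamBall (n+1) r) = hamBall n r := by
  ext x; simp [hammingNorm_snoc]

lemma slice_hamBall_one (r : ℕ) : slice 1 (hamBall (n+1) (r+1)) = hamBall n r := by
  ext x; simp [hammingNorm_snoc]

lemma hamBall_zero : hamBall n 0 = {0} := by
  ext x; simp [Nat.le_zero, hammingNorm_eq_zero]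

lemma hamBall_univ : hamBall n n = Finset.univ := by
  ext x
  simpa using le_trans hammingNorm_le_card_fintype (by simp)

lemma card_F2 : Fintype.card (F2 n) = 2 ^ n := by
  simp [ZMod]

/-! ### Translations -/

lemma slice_add_singleton (ε δ : ZMod 2) (X : Finset (F2 (n+1))) :
    slice ε (X + {Fin.snoc (0 : F2 n) δ}) = slice (ε + δ) X := by
  ext x
  simp only [mem_slice]
  constructor
  · intro h
    rw [Finset.mem_add] at h
    obtain ⟨a, ha, b, hb, hab⟩ := h
    rw [Finset.mem_singleton] at hb
    subst hb
    have : a = Fin.snoc x (ε + δ) := by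
      have h2 := congrArg (· + (Fin.snoc (0 : F2 n) δ : F2 (n+1))) hab
      simp only at h2
      rw [add_assoc, f2_add_self, add_zero, snoc_add, add_zero] at h2
      exact h2
    rwa [this] at ha
  · intro h
    rw [Finset.mem_add]
    refine ⟨Fin.snoc x (ε + δ), h, Fin.snoc (0 : F2 n) δ, Finset.mem_singleton_self _, ?_⟩
    rw [snoc_add, add_zero, add_assoc, zmod2_add_self, add_zero]

lemma card_add_singleton (X : Finset (F2 (n+1))) (v : F2 (n+1)) :
    (X + {v}).card = X.card := by
  rw [Finset.add_singleton]
  exact Finset.card_image_of_injective _ (add_left_injective v)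

/-! ### Easy cases -/

lemma case_trivial (r : ℕ) (A B C : Finset (F2 n))
    (h : (A.card : ℝ) * B.card * C.card = 0) :
    min (bnd r ((A.card : ℝ) * B.card * C.card)) ((2:ℝ)^n)
      ≤ ((A + B + C + hamBall n r).card : ℝ) := by
  rw [h, bnd_zero]
  have h2 : min (0:ℝ) ((2:ℝ)^n) = 0 := min_eq_left (by positivity)
  rw [h2]
  positivity

lemma case_r0 (A B C : Finset (F2 n)) (hB : B.Nonempty) (hC : C.Nonempty) :
    min (bnd 0 ((A.card : ℝ) * B.card * C.card)) ((2:ℝ)^n)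
      ≤ ((A + B + C + hamBall n 0).card : ℝ) := by
  by_cases hA : A.Nonempty
  case neg =>
    apply case_trivial
    rw [Finset.not_nonempty_iff_eq_empty] at hA
    simp [hA]
  rw [hamBall_zero]
  have h : A + B + C + ({0} : Finset (F2 n)) = A + B + C := by
    rw [Finset.add_singleton]; simp
  rw [h]
  set M := (((A + B + C).card : ℕ) : ℝ) with hM
  have hA' : (A.card : ℝ) ≤ M := by
    have h1 : A.card ≤ (A + B + C).card :=
      le_trans (Finset.card_le_card_add_right hB) (Finset.card_le_card_add_right hC)
    rw [hM]; exact_mod_cast h1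
  have hB' : (B.card : ℝ) ≤ M := by
    have h1 : B.card ≤ (A + B + C).card :=
      le_trans (Finset.card_le_card_add_left hA) (Finset.card_le_card_add_right hC)
    rw [hM]; exact_mod_cast h1
  have hC' : (C.card : ℝ) ≤ M := by
    have h1 : C.card ≤ (A + B + C).card := Finset.card_le_card_add_left (hA.add hB)
    rw [hM]; exact_mod_cast h1
  refine le_trans (min_le_left _ _) ?_
  have hM0 : (0:ℝ) ≤ M := by positivity
  calc bnd 0 ((A.card : ℝ) * B.card * C.card) ≤ bnd 0 (M^3) := by
        apply bnd_mono 0 (by positivity)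
        have h1 : (0:ℝ) ≤ (A.card : ℝ) := by positivity
        have h2 : (0:ℝ) ≤ (B.card : ℝ) := by positivity
        have h3 : (0:ℝ) ≤ (C.card : ℝ) := by positivity
        have hab : (A.card : ℝ) * (B.card : ℝ) ≤ M * M := mul_le_mul hA' hB' h2 hM0
        have habc : (A.card : ℝ) * (B.card : ℝ) * (C.card : ℝ) ≤ M * M * M :=
          mul_le_mul hab hC' h3 (by positivity)
        nlinarith
    _ ≤ M := bnd_cube 0 hM0

lemma case_univ (A B C : Finset (F2 n)) (hA : A.Nonempty) (hB : B.Nonempty) (hC : C.Nonempty)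
    (p : ℝ) :
    min (bnd n p) ((2:ℝ)^n) ≤ ((A + B + C + hamBall n n).card : ℝ) := by
  rw [hamBall_univ]
  refine le_trans (min_le_right _ _) ?_
  have h1 : (Finset.univ : Finset (F2 n)).card ≤ (A + B + C + Finset.univ).card :=
    Finset.card_le_card_add_left ((hA.add hB).add hC)
  have h2 : (Finset.univ : Finset (F2 n)).card = 2^n := by
    rw [Finset.card_univ, card_F2]
  exact_mod_cast h2 ▸ h1

/-! ### The induction step -/

lemma key_step (n : ℕ)
    (ih : ∀ r', r' ≤ n → ∀ X Y Z : Finset (F2 n),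
      min (bnd r' ((X.card : ℝ) * Y.card * Z.card)) ((2:ℝ)^n)
        ≤ ((X + Y + Z + hamBall n r').card : ℝ))
    (r' : ℕ) (hrn : r' + 1 ≤ n)
    (A B C : Finset (F2 (n+1)))
    (hAb : (slice 1 A).card ≤ (slice 0 A).card)
    (hBb : (slice 1 B).card ≤ (slice 0 B).card)
    (hCb : (slice 1 C).card ≤ (slice 0 C).card)
    (hAne : A.Nonempty) (hBne : B.Nonempty) (hCne : C.Nonempty) :
    min (bnd (r'+1) ((A.card : ℝ) * B.card * C.card)) ((2:ℝ)^(n+1))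
      ≤ ((A + B + C + hamBall (n+1) (r'+1)).card : ℝ) := by
  set S := A + B + C + hamBall (n+1) (r'+1) with hSe
  have sub0 : slice 0 A + slice 0 B + slice 0 C + hamBall n (r'+1) ⊆ slice 0 S := by
    have h := slice_add4 0 0 0 0 A B C (hamBall (n+1) (r'+1))
    rw [slice_hamBall_zero] at h
    simpa using h
  have sub1a : slice 0 A + slice 0 B + slice 0 C + hamBall n r' ⊆ slice 1 S := by
    have h := slice_add4 0 0 0 1 A B C (hamBall (n+1) (r'+1))
    rw [slice_hamBall_one] at h
    simpa using h
  have sub1b : slice 1 A + slice 0 B + slice 0 C + hamBall n (r'+1) ⊆ slice 1 S := by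
    have h := slice_add4 1 0 0 0 A B C (hamBall (n+1) (r'+1))
    rw [slice_hamBall_zero] at h
    simpa using h
  have sub1c : slice 0 A + slice 1 B + slice 0 C + hamBall n (r'+1) ⊆ slice 1 S := by
    have h := slice_add4 0 1 0 0 A B C (hamBall (n+1) (r'+1))
    rw [slice_hamBall_zero] at h
    simpa using h
  have sub1d : slice 0 A + slice 0 B + slice 1 C + hamBall n (r'+1) ⊆ slice 1 S := by
    have h := slice_add4 0 0 1 0 A B C (hamBall (n+1) (r'+1))
    rw [slice_hamBall_zero] at h
    simpa using h
  have hrn' : r' ≤ n := Nat.le_of_succ_le hrn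
  have h0 : min (bnd (r'+1) (((slice 0 A).card : ℝ) * (slice 0 B).card * (slice 0 C).card))
      ((2:ℝ)^n) ≤ ((slice 0 S).card : ℝ) := by
    refine le_trans (ih (r'+1) hrn _ _ _) ?_
    exact_mod_cast Finset.card_le_card sub0
  have h1 : min (bnd r' (((slice 0 A).card : ℝ) * (slice 0 B).card * (slice 0 C).card))
      ((2:ℝ)^n) ≤ ((slice 1 S).card : ℝ) := by
    refine le_trans (ih r' hrn' _ _ _) ?_
    exact_mod_cast Finset.card_le_card sub1a
  have h2b : min (bnd (r'+1) (((slice 1 A).card : ℝ) * (slice 0 B).card * (slice 0 C).card))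
      ((2:ℝ)^n) ≤ ((slice 1 S).card : ℝ) := by
    refine le_trans (ih (r'+1) hrn _ _ _) ?_
    exact_mod_cast Finset.card_le_card sub1b
  have h2c : min (bnd (r'+1) (((slice 0 A).card : ℝ) * (slice 1 B).card * (slice 0 C).card))
      ((2:ℝ)^n) ≤ ((slice 1 S).card : ℝ) := by
    refine le_trans (ih (r'+1) hrn _ _ _) ?_
    exact_mod_cast Finset.card_le_card sub1c
  have h2d : min (bnd (r'+1) (((slice 0 A).card : ℝ) * (slice 0 B).card * (slice 1 C).card))
      ((2:ℝ)^n) ≤ ((slice 1 S).card : ℝ) := by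
    refine le_trans (ih (r'+1) hrn _ _ _) ?_
    exact_mod_cast Finset.card_le_card sub1d
  have hx0 : (1:ℝ) ≤ ((slice 0 A).card : ℝ) := by
    have h1 := Finset.card_pos.mpr hAne
    rw [card_eq_slices A] at h1
    have h2 : 1 ≤ (slice 0 A).card := by omega
    exact_mod_cast h2
  have hy0 : (1:ℝ) ≤ ((slice 0 B).card : ℝ) := by
    have h1 := Finset.card_pos.mpr hBne
    rw [card_eq_slices B] at h1
    have h2 : 1 ≤ (slice 0 B).card := by omega
    exact_mod_cast h2
  have hz0 : (1:ℝ) ≤ ((slice 0 C).card : ℝ) := by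
    have h1 := Finset.card_pos.mpr hCne
    rw [card_eq_slices C] at h1
    have h2 : 1 ≤ (slice 0 C).card := by omega
    exact_mod_cast h2
  have hPA : ((A.card : ℕ) : ℝ) = ((slice 0 A).card : ℝ) + ((slice 1 A).card : ℝ) := by
    rw [card_eq_slices A]; push_cast; ring
  have hPB : ((B.card : ℕ) : ℝ) = ((slice 0 B).card : ℝ) + ((slice 1 B).card : ℝ) := by
    rw [card_eq_slices B]; push_cast; ring
  have hPC : ((C.card : ℕ) : ℝ) = ((slice 0 C).card : ℝ) + ((slice 1 C).card : ℝ) := by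
    rw [card_eq_slices C]; push_cast; ring
  have hcardS : ((S.card : ℕ) : ℝ) = ((slice 0 S).card : ℝ) + ((slice 1 S).card : ℝ) := by
    rw [card_eq_slices S]; push_cast; ring
  rw [hPA, hPB, hPC, hcardS]
  exact assemble r' n _ _ _ _ _ _ _ _ hx0 hy0 hz0
    (by positivity) (by positivity) (by positivity)
    (by exact_mod_cast hAb) (by exact_mod_cast hBb) (by exact_mod_cast hCb)
    h0 h1 h2b h2c h2d

/-! ### Balancing translations -/

/-- The balancing translation: `bal X` translates `X` by the last basis vector
if the top slice is bigger than the bottom slice. -/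
noncomputable def bal (X : Finset (F2 (n+1))) : Finset (F2 (n+1)) :=
  X + {Fin.snoc (0 : F2 n) (if (slice 1 X).card ≤ (slice 0 X).card then 0 else 1)}

lemma bal_card (X : Finset (F2 (n+1))) : (bal X).card = X.card := card_add_singleton _ _

lemma bal_balanced (X : Finset (F2 (n+1))) :
    (slice 1 (bal X)).card ≤ (slice 0 (bal X)).card := by
  unfold bal
  by_cases h : (slice 1 X).card ≤ (slice 0 X).card
  · rw [if_pos h, slice_add_singleton, slice_add_singleton, add_zero, add_zero]
    exact h
  · rw [if_neg h, slice_add_singleton, slice_add_singleton]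
    norm_num
    exact le_of_not_ge h

lemma bal_nonempty {X : Finset (F2 (n+1))} (h : X.Nonempty) : (bal X).Nonempty :=
  h.add (Finset.singleton_nonempty _)

lemma bal_sum_card (A B C : Finset (F2 (n+1))) (H : Finset (F2 (n+1))) :
    (bal A + bal B + bal C + H).card = (A + B + C + H).card := by
  unfold bal
  set u := ({Fin.snoc (0 : F2 n) (if (slice 1 A).card ≤ (slice 0 A).card then 0 else 1)} :
    Finset (F2 (n+1)))
  set v := ({Fin.snoc (0 : F2 n) (if (slice 1 B).card ≤ (slice 0 B).card then 0 else 1)} :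
    Finset (F2 (n+1)))
  set w := ({Fin.snoc (0 : F2 n) (if (slice 1 C).card ≤ (slice 0 C).card then 0 else 1)} :
    Finset (F2 (n+1)))
  have h : A + u + (B + v) + (C + w) + H = A + B + C + H + u + v + w := by abel
  rw [h]
  simp only [u, v, w, card_add_singleton]

/-! ### The main induction -/

lemma key : ∀ n : ℕ, ∀ r, r ≤ n → ∀ A B C : Finset (F2 n),
    min (bnd r ((A.card : ℝ) * B.card * C.card)) ((2:ℝ)^n)
      ≤ ((A + B + C + hamBall n r).card : ℝ) := by
  intro n
  induction n with
  | zero =>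
    intro r hr A B C
    interval_cases r
    rcases B.eq_empty_or_nonempty with hB | hB
    · exact case_trivial 0 A B C (by simp [hB])
    rcases C.eq_empty_or_nonempty with hC | hC
    · exact case_trivial 0 A B C (by simp [hC])
    exact case_r0 A B C hB hC
  | succ n ih =>
    intro r hr A B C
    rcases A.eq_empty_or_nonempty with hA | hA
    · exact case_trivial r A B C (by simp [hA])
    rcases B.eq_empty_or_nonempty with hB | hB
    · exact case_trivial r A B C (by simp [hB])
    rcases C.eq_empty_or_nonempty with hC | hC
    · exact case_trivial r A B C (by simp [hC])
    rcases r with _ | r'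
    · exact case_r0 A B C hB hC
    rcases Nat.lt_or_ge r' n with hlt | hge
    · have hkey := key_step n (fun r'' h X Y Z => ih r'' h X Y Z) r' hlt
        (bal A) (bal B) (bal C) (bal_balanced A) (bal_balanced B) (bal_balanced C)
        (bal_nonempty hA) (bal_nonempty hB) (bal_nonempty hC)
      rw [bal_card, bal_card, bal_card, bal_sum_card] at hkey
      exact hkey
    · have hreq : r' + 1 = n + 1 := by omega
      rw [hreq]
      exact case_univ A B C hA hB hC _

/-! ### Conversion of the constant -/

lemma conv (r : ℕ) : (2 + Real.sqrt 5) ^ ((r:ℝ)/3) = phi ^ r := by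
  have h1 : (2 + Real.sqrt 5) = phi ^ (3:ℕ) := by
    unfold phi
    linear_combination (-(3 + Real.sqrt 5)/8) * sqrt5_sq
  rw [h1, ← Real.rpow_natCast phi 3, ← Real.rpow_mul phi_pos.le]
  rw [show ((3:ℕ):ℝ) * ((r:ℝ)/3) = (r:ℝ) by push_cast; ring]
  exact Real.rpow_natCast phi r

end ExpansionAux

/-- Expansion result (Proposition 3.4): for any `A, A', A'' ⊆ F_2^n`,
`|A + A' + A'' + H_r(n)| ≥ min((1/2)(2+√5)^{r/3} (|A||A'||A''|)^{1/3}, 2^n)`. -/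
theorem expansion_result (n r : ℕ) (hr : r ≤ n) (A A' A'' : Finset (F2 n)) :
    min ((1 / 2 : ℝ) * (2 + Real.sqrt 5) ^ ((r : ℝ) / 3) *
        ((A.card : ℝ) * A'.card * A''.card) ^ ((1 : ℝ) / 3))
      ((2 : ℝ) ^ n) ≤ ((A + A' + A'' + hamBall n r).card : ℝ) := by
  rw [ExpansionAux.conv r]
  exact ExpansionAux.key n r hr A A' A''
end

section
/- Let K be a real number with 1 ≤ K < 7/4, and let A ⊆ F_2^n be a nonempty set with |A + A| ≤ K·|A|. Then there exists an affine subspace V ⊆ F_2^n with A ⊆ V and |V| ≤ K·|A|. -/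
/-!
After translating `A` so that it contains `0` (which does not change `A + A` in characteristic
two), it suffices to show `B + B + B ⊆ B + B` for `B = a + A`: then `B + B` is closed under
addition, hence a subspace of size `|A + A|` containing `B`.

Suppose `x = b₁ + b₂ + b₃ ∉ B + B`. Then `H = {0, b₁ + b₂, b₁ + b₃, b₂ + b₃}` is a subgroup of
order four with `x + H = {x, b₁, b₂, b₃}`. Let `L` be the points of `B` that are alone in their
`H`-coset. Every other `c ∈ B` has `x + c ∈ B + B`, so `B` and `x + (B \ L)` are disjoint subsets
of `B + B`, and the union of cosets `x + B + H` meets the complement of `B + B` only in `x + L`.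
Comparing with `|B + H| ≥ 4|L| + |B \ L|`, improved to `4|L| + 4|B \ L| / 3` when no
`H`-coset lies in `B` (if one does, `B + H` is a translate of a subset of `B + B`), gives
`7|B| ≤ 4|B + B|` in both cases.
-/

open Finset Pointwise

section AddCommGroup
variable {G : Type*} [AddCommGroup G] [DecidableEq G]

lemma card_mul_le_card_add_mul {C H : Finset G} {k : ℕ}
    (hk : ∀ y, #{c ∈ C | y - c ∈ H} ≤ k) : #C * #H ≤ #(C + H) * k := by
  refine card_mul_le_card_mul (fun c y ↦ y - c ∈ H) (fun c hc ↦ ?_) (fun y _ ↦ hk y)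
  rw [← card_vadd_finset c H]
  refine card_le_card fun y hy ↦ ?_
  obtain ⟨h, hh, rfl⟩ := mem_vadd_finset.1 hy
  simpa [mem_bipartiteAbove] using ⟨add_mem_add hc hh, hh⟩

lemma card_add_le_card_add_self_of_vadd_subset {B H : Finset G} {c : G} (hc : c +ᵥ H ⊆ B) :
    #(B + H) ≤ #(B + B) := by
  rw [← card_vadd_finset c, ← add_vadd_comm]
  exact card_le_card (add_subset_add_left hc)

def lonePoints (H B : Finset G) : Finset G := {c ∈ B | ∀ h ∈ H, c + h ∈ B → h = 0}

lemma lonePoints_subset {H B : Finset G} : lonePoints H B ⊆ B := filter_subset _ _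

end AddCommGroup

section ZModTwo
variable {G : Type*} [AddCommGroup G] [Module (ZMod 2) G] [DecidableEq G]
open ZModModule

lemma exists_submodule_coe_eq_add {B : Finset G} (h0 : 0 ∈ B) (h3 : B + B + B ⊆ B + B) :
    ∃ W : Submodule (ZMod 2) G, (W : Set G) = ↑(B + B) := by
  have h00 : (0 : G) ∈ B + B := by simpa using add_mem_add h0 h0
  have hclosed : B + B + (B + B) ⊆ B + B := by
    rw [← add_assoc]
    exact (add_subset_add_right h3).trans h3
  refine ⟨{ carrier := ↑(B + B)
            add_mem' := fun hx hy ↦ hclosed (add_mem_add hx hy)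
            zero_mem' := h00
            smul_mem' := fun c x hx ↦ ?_ }, rfl⟩
  rcases (by decide : ∀ c : ZMod 2, c = 0 ∨ c = 1) c with rfl | rfl
  · rw [zero_smul]
    exact h00
  · rwa [one_smul]

def kleinFour (u v : G) : Finset G := {0, u, v, u + v}

lemma kleinFour_add_subset (u v : G) : kleinFour u v + kleinFour u v ⊆ kleinFour u v := by
  simp only [kleinFour, add_subset_iff, mem_insert, mem_singleton, forall_eq_or_imp, forall_eq]
  and_intros <;> (try abel_nf) <;> simp [two_zsmul, add_self]

lemma card_kleinFour {u v : G} (hu : u ≠ 0) (hv : v ≠ 0) (huv : u ≠ v) :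
    #(kleinFour u v) = 4 := by
  have huv' : u + v ≠ 0 := by rwa [Ne, ← sub_eq_add, sub_eq_zero]
  rw [kleinFour, card_insert_of_notMem, card_insert_of_notMem, card_pair]
  all_goals simp_all [eq_comm]

variable {H B : Finset G} {x : G}

lemma eq_of_mem_lonePoints {c c' : G} (hc : c ∈ lonePoints H B) (hc' : c' ∈ B)
    (h : c + c' ∈ H) : c' = c := by
  have hcc' : c + (c + c') = c' := by rw [← add_assoc, add_self, zero_add]
  have := (mem_filter.1 hc).2 _ h (by rwa [hcc'])
  rwa [← sub_eq_add, sub_eq_zero, eq_comm] at this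

lemma card_lonePoints_mul_le (hH : H + H ⊆ H) :
    #(lonePoints H B) * #H ≤ #(lonePoints H B + H) := by
  simpa using card_mul_le_card_add_mul (k := 1) fun y ↦ card_le_one.2 fun c hc c' hc' ↦ by
    simp only [mem_filter, sub_eq_add] at hc hc'
    refine (eq_of_mem_lonePoints hc.1 (mem_filter.1 hc'.1).1 ?_).symm
    rw [← add_add_add_cancel c y c', add_comm c y]
    exact hH (add_mem_add hc.2 hc'.2)

lemma card_add_eq_card_lonePoints_add_add (hH : H + H ⊆ H) :
    #(B + H) = #(lonePoints H B + H) + #((B \ lonePoints H B) + H) := by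
  rw [← card_union_of_disjoint, ← union_add, union_sdiff_of_subset lonePoints_subset]
  refine disjoint_left.2 fun z hz hz' ↦ ?_
  obtain ⟨c, hc, h, hh, rfl⟩ := mem_add.1 hz
  obtain ⟨c', hc', h', hh', hcz⟩ := mem_add.1 hz'
  have hcc' : c + c' = h + h' := by
    calc c + c' = (c' + h') + (h + c') := by rw [hcz, add_add_add_cancel]
      _ = h + h' := by abel_nf; simp [two_zsmul, add_self]
  apply (mem_sdiff.1 hc').2
  rwa [eq_of_mem_lonePoints hc (mem_sdiff.1 hc').1 (hcc' ▸ hH (add_mem_add hh hh'))]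

lemma card_mul_le_card_add_mul_card_sub_one (hB : ∀ y : G, ¬ y +ᵥ H ⊆ B) :
    #B * #H ≤ #(B + H) * (#H - 1) := by
  refine card_mul_le_card_add_mul fun y ↦ ?_
  by_contra! hlt
  set F := {c ∈ B | y - c ∈ H}
  have hFH : F.image (y - ·) ⊆ H := fun h hh ↦ by
    obtain ⟨c, hc, rfl⟩ := mem_image.1 hh
    exact (mem_filter.1 hc).2
  have hcard : #(F.image (y - ·)) = #F := card_image_of_injective _ sub_right_injective
  have hF : F.image (y - ·) = H := eq_of_subset_of_card_le hFH (by omega)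
  refine hB y fun z hz ↦ ?_
  obtain ⟨h, hh, rfl⟩ := mem_vadd_finset.1 hz
  obtain ⟨c, hc, rfl⟩ := mem_image.1 (hF ▸ hh)
  simpa [sub_eq_add, ← add_assoc, add_self] using (mem_filter.1 hc).1

lemma add_mem_add_self_of_mem_sdiff_lonePoints (hxH : ∀ h ∈ H, h ≠ 0 → x + h ∈ B) {c : G}
    (hc : c ∈ B \ lonePoints H B) : x + c ∈ B + B := by
  obtain ⟨hcB, hcL⟩ := mem_sdiff.1 hc
  simp only [lonePoints, mem_filter, hcB, true_and, not_forall] at hcL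
  obtain ⟨h, hh, hchB, hne⟩ := hcL
  simpa [add_comm x h, add_add_add_cancel, add_comm c x] using
    add_mem_add hchB (hxH h hh hne)

lemma two_mul_card_le_card_add_self_add_card_lonePoints (h0 : 0 ∈ B) (hx : x ∉ B + B)
    (hxH : ∀ h ∈ H, h ≠ 0 → x + h ∈ B) :
    2 * #B ≤ #(B + B) + #(lonePoints H B) := by
  have hdisj : Disjoint B (x +ᵥ (B \ lonePoints H B)) := by
    refine disjoint_right.2 fun z hz hzB ↦ hx ?_
    obtain ⟨c, hc, rfl⟩ := mem_vadd_finset.1 hz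
    simpa [add_assoc, add_self] using add_mem_add hzB (mem_sdiff.1 hc).1
  have hsub : B ∪ (x +ᵥ (B \ lonePoints H B)) ⊆ B + B := by
    refine union_subset (subset_add_left B h0) fun z hz ↦ ?_
    obtain ⟨c, hc, rfl⟩ := mem_vadd_finset.1 hz
    exact add_mem_add_self_of_mem_sdiff_lonePoints hxH hc
  have := card_le_card hsub
  rw [card_union_of_disjoint hdisj, card_vadd_finset, card_sdiff_of_subset lonePoints_subset]
    at this
  have := card_le_card (lonePoints_subset (H := H) (B := B))
  omega

lemma card_add_le_card_add_self_add_card_lonePoints (hxH : ∀ h ∈ H, h ≠ 0 → x + h ∈ B) :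
    #(B + H) ≤ #(B + B) + #(lonePoints H B) := by
  have hsub : x +ᵥ (B + H) ⊆ (B + B) ∪ (x +ᵥ lonePoints H B) := by
    intro z hz
    obtain ⟨_, hy, rfl⟩ := mem_vadd_finset.1 hz
    obtain ⟨c, hc, h, hh, rfl⟩ := mem_add.1 hy
    rw [vadd_eq_add, mem_union]
    by_cases h0 : h = 0
    · rw [h0, add_zero]
      by_cases hcL : c ∈ lonePoints H B
      · exact Or.inr (vadd_mem_vadd_finset hcL)
      · exact Or.inl (add_mem_add_self_of_mem_sdiff_lonePoints hxH (mem_sdiff.2 ⟨hc, hcL⟩))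
    · left
      rw [← add_left_comm]
      exact add_mem_add hc (hxH h hh h0)
  calc #(B + H) = #(x +ᵥ (B + H)) := (card_vadd_finset _ _).symm
    _ ≤ #(B + B) + #(x +ᵥ lonePoints H B) := (card_le_card hsub).trans (card_union_le _ _)
    _ = #(B + B) + #(lonePoints H B) := by rw [card_vadd_finset]

lemma seven_mul_card_le_four_mul_card_add_self (h0 : 0 ∈ B) (hx : x ∉ B + B)
    (hxH : ∀ h ∈ H, h ≠ 0 → x + h ∈ B) (hH : H + H ⊆ H) (hH4 : #H = 4) :
    7 * #B ≤ 4 * #(B + B) := by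
  have hL := card_lonePoints_mul_le hH (B := B)
  have hsplit := card_add_eq_card_lonePoints_add_add hH (B := B)
  have h1 := two_mul_card_le_card_add_self_add_card_lonePoints h0 hx hxH
  have h2 := card_add_le_card_add_self_add_card_lonePoints hxH
  have hB : #B = #(lonePoints H B) + #(B \ lonePoints H B) := by
    rw [card_sdiff_of_subset lonePoints_subset,
      Nat.add_sub_cancel' (card_le_card lonePoints_subset)]
  rw [hH4] at hL
  by_cases hfull : ∃ c : G, c +ᵥ H ⊆ B
  · obtain ⟨c, hc⟩ := hfull
    have := card_add_le_card_add_self_of_vadd_subset hc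
    have := card_le_card_add_right (s := B \ lonePoints H B) (card_pos.1 (by omega : 0 < #H))
    omega
  · push Not at hfull
    have := card_mul_le_card_add_mul_card_sub_one (B := B \ lonePoints H B)
      fun y hy ↦ hfull y (hy.trans sdiff_subset)
    rw [hH4] at this
    omega

lemma add_add_subset_add_of_four_mul_card_lt (h0 : 0 ∈ B) (hB : 4 * #(B + B) < 7 * #B) :
    B + B + B ⊆ B + B := by
  intro z hz
  obtain ⟨_, hb₁₂, b₃, hb₃, rfl⟩ := mem_add.1 hz
  obtain ⟨b₁, hb₁, b₂, hb₂, rfl⟩ := mem_add.1 hb₁₂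
  by_contra hx
  have hB2 : B ⊆ B + B := subset_add_left B h0
  have h₁₂ : b₁ + b₂ ≠ 0 := fun h ↦ hx (by simpa [h] using hB2 hb₃)
  have h₁₃ : b₁ + b₃ ≠ 0 := fun h ↦ hx (by
    rw [add_right_comm, h, zero_add]; exact hB2 hb₂)
  have h₂₃ : b₁ + b₂ ≠ b₁ + b₃ := fun h ↦ hx (by
    rw [add_left_cancel h, add_assoc, add_self, add_zero]; exact hB2 hb₁)
  refine hB.not_ge (seven_mul_card_le_four_mul_card_add_self h0 hx ?_
    (kleinFour_add_subset _ _) (card_kleinFour h₁₂ h₁₃ h₂₃))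
  have hw : (b₁ + b₂) + (b₁ + b₃) = b₂ + b₃ := by rw [add_comm b₁ b₂, add_add_add_cancel]
  simp only [kleinFour, hw, mem_insert, mem_singleton, forall_eq_or_imp, forall_eq]
  refine ⟨fun h ↦ absurd rfl h, fun _ ↦ ?_, fun _ ↦ ?_, fun _ ↦ ?_⟩ <;>
    abel_nf <;> simpa [two_zsmul, add_self]

end ZModTwo

theorem F_small_K_first_range_general {n : ℕ} (K : ℝ) (hK2 : K < 7 / 4)
    (A : Finset (F2 n)) (hA : A.Nonempty)
    (hdouble : ((A + A).card : ℝ) ≤ K * A.card) :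
    ∃ (W : Submodule (ZMod 2) (F2 n)) (t : F2 n),
      (↑A : Set (F2 n)) ⊆ t +ᵥ (W : Set (F2 n)) ∧
      (Nat.card W : ℝ) ≤ K * A.card := by
  obtain ⟨a, ha⟩ := hA
  set B := a +ᵥ A
  have hBB : B + B = A + A := by
    rw [vadd_add_assoc, add_vadd_comm, vadd_vadd, ZModModule.add_self, zero_vadd]
  have h0 : 0 ∈ B := mem_vadd_finset.2 ⟨a, ha, ZModModule.add_self a⟩
  have hlt : 4 * #(B + B) < 7 * #B := by
    have hpos : (0 : ℝ) < #A := by exact_mod_cast card_pos.2 ⟨a, ha⟩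
    have : (4 * #(A + A) : ℝ) < 7 * #A := by nlinarith
    rw [hBB, card_vadd_finset]
    exact_mod_cast this
  obtain ⟨W, hW⟩ := exists_submodule_coe_eq_add h0 (add_add_subset_add_of_four_mul_card_lt h0 hlt)
  refine ⟨W, a, fun z hz ↦ ⟨a + z, ?_, by simp [← add_assoc, ZModModule.add_self]⟩, ?_⟩
  · rw [hW]
    exact subset_add_left B h0 (vadd_mem_vadd_finset hz)
  · rw [← SetLike.coe_sort_coe, hW, Nat.card_coe_set_eq, Set.ncard_coe_finset, hBB]
    exact hdouble

/-- `F(K) ≤ K` for `K < 7/4` (Proposition 6.1): if `1 ≤ K < 7/4` and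
`|A+A| ≤ K|A|`, then `A` is contained in an affine subspace of size at most
`K|A|`. -/
theorem F_small_K_first_range {n : ℕ} (K : ℝ) (hK1 : 1 ≤ K) (hK2 : K < 7 / 4)
    (A : Finset (F2 n)) (hA : A.Nonempty)
    (hdouble : ((A + A).card : ℝ) ≤ K * A.card) :
    ∃ (W : Submodule (ZMod 2) (F2 n)) (t : F2 n),
      (↑A : Set (F2 n)) ⊆ t +ᵥ (W : Set (F2 n)) ∧
      (Nat.card W : ℝ) ≤ K * A.card :=
  F_small_K_first_range_general K hK2 A hA hdouble
end

section
/- Let K be a real number with 1 ≤ K < 9/5, and let A ⊆ F_2^n be a nonempty set with |A + A| ≤ K·|A|. Then there exist a linear subspace H ⊆ F_2^n with |H| ≤ |A| and elements t₁, t₂, t₃ ∈ F_2^n such that A ⊆ (t₁ + H) ∪ (t₂ + H) ∪ (t₃ + H). -/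
open Finset Pointwise

namespace GKAux
variable {n : ℕ}

lemma z2 : ∀ c : ZMod 2, c = 0 ∨ c = 1 := by decide

lemma addSelf (x : F2 n) : x + x = 0 := by
  funext i
  have h : ∀ a : ZMod 2, a + a = 0 := by decide
  exact h (x i)

lemma addCancel (x y : F2 n) : x + (x + y) = y := by
  rw [← add_assoc, addSelf, zero_add]

lemma addCancel' (x y : F2 n) : (y + x) + x = y := by
  rw [add_assoc, addSelf, add_zero]

def tr (g : F2 n) (X : Finset (F2 n)) : Finset (F2 n) := X.image (· + g)

lemma mem_tr {g x : F2 n} {X : Finset (F2 n)} : x ∈ tr g X ↔ x + g ∈ X := by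
  simp only [tr, Finset.mem_image]
  constructor
  · rintro ⟨y, hy, rfl⟩; rwa [addCancel']
  · intro h; exact ⟨x + g, h, addCancel' g x⟩

lemma card_tr (g : F2 n) (X : Finset (F2 n)) : (tr g X).card = X.card :=
  Finset.card_image_of_injective _ (fun a b h => by
    have := congrArg (· + g) h
    simpa [addCancel'] using this)

lemma tr_add (g : F2 n) (X S : Finset (F2 n)) : tr g X + S = tr g (X + S) := by
  ext x
  constructor
  · intro hx
    rw [Finset.mem_add] at hx
    obtain ⟨y, hy, z, hz, rfl⟩ := hx
    rw [mem_tr] at hy ⊢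
    rw [add_right_comm]
    exact Finset.add_mem_add hy hz
  · intro hx
    rw [mem_tr, Finset.mem_add] at hx
    obtain ⟨y, hy, z, hz, hyz⟩ := hx
    rw [Finset.mem_add]
    exact ⟨y + g, mem_tr.2 (by rwa [addCancel']), z, hz, by rw [add_right_comm, hyz, addCancel']⟩

lemma tr_zero (X : Finset (F2 n)) : tr 0 X = X := by
  ext x; simp [mem_tr]

lemma tr_tr (g : F2 n) (X : Finset (F2 n)) : tr g (tr g X) = X := by
  ext x; rw [mem_tr, mem_tr, addCancel']

lemma mem_tr_self {c : F2 n} {M : Finset (F2 n)} (h0 : 0 ∈ M) : c ∈ tr c M :=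
  mem_tr.2 (by rw [addSelf]; exact h0)

lemma tr_eq_of_mem {M : Finset (F2 n)} (hcl : ∀ x ∈ M, ∀ y ∈ M, x + y ∈ M)
    {x c : F2 n} (hx : x ∈ tr c M) : tr x M = tr c M := by
  have hxc : x + c ∈ M := mem_tr.1 hx
  ext z
  simp only [mem_tr]
  constructor
  · intro h
    have := hcl _ h _ hxc
    rwa [add_assoc, addCancel] at this
  · intro h
    have hcx : c + x ∈ M := by rwa [add_comm] at hxc
    have := hcl _ h _ hcx
    rwa [add_assoc, addCancel] at this

lemma disj_tr {M : Finset (F2 n)} (h0 : 0 ∈ M) (hcl : ∀ x ∈ M, ∀ y ∈ M, x + y ∈ M)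
    {x c : F2 n} (hx : x ∉ tr c M) : Disjoint (tr x M) (tr c M) := by
  rw [Finset.disjoint_left]
  intro z hz1 hz2
  have e1 : tr z M = tr x M := tr_eq_of_mem hcl hz1
  have e2 : tr z M = tr c M := tr_eq_of_mem hcl hz2
  exact hx (by rw [← e2, e1]; exact mem_tr_self h0)

lemma nat_card_zmod2 : Nat.card (ZMod 2) = 2 := by
  rw [Nat.card_eq_fintype_card]; rfl

lemma half_subgroup (P : Submodule (ZMod 2) (F2 n)) {g : F2 n} (hg : g ∈ P) {i : Fin n}
    (hgi : g i = 1) :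
    ∃ W : Submodule (ZMod 2) (F2 n), W ≤ P ∧ (∀ x ∈ P, x i = 0 → x ∈ W) ∧
      2 * Nat.card W ≤ Nat.card P := by
  classical
  set W := P ⊓ LinearMap.ker (LinearMap.proj (R := ZMod 2) (φ := fun _ : Fin n => ZMod 2) i)
    with hW
  have hWmem : ∀ x : F2 n, x ∈ W ↔ x ∈ P ∧ x i = 0 := by
    intro x
    simp [hW, Submodule.mem_inf, LinearMap.mem_ker]
  refine ⟨W, fun x hx => ((hWmem x).1 hx).1, fun x hx h0 => (hWmem x).2 ⟨hx, h0⟩, ?_⟩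
  have key : Nat.card (↥W × ZMod 2) ≤ Nat.card ↥P := by
    apply Nat.card_le_card_of_injective
      (f := fun p : ↥W × ZMod 2 =>
        (⟨p.1.1 + p.2 • g, add_mem ((hWmem p.1.1).1 p.1.2).1 (Submodule.smul_mem P _ hg)⟩ : ↥P))
    rintro ⟨⟨x, hx⟩, c⟩ ⟨⟨y, hy⟩, d⟩ hxy
    have hxy' : x + c • g = y + d • g := congrArg Subtype.val hxy
    have hcoord : c = d := by
      have := congrFun hxy' i
      simp only [Pi.add_apply, Pi.smul_apply, smul_eq_mul, hgi, mul_one,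
        ((hWmem x).1 hx).2, ((hWmem y).1 hy).2, zero_add] at this
      exact this
    subst hcoord
    have hxyv : x = y := add_right_cancel hxy'
    simp [Prod.ext_iff, Subtype.ext_iff, hxyv]
  rw [Nat.card_prod, nat_card_zmod2, mul_comm] at key
  exact key

lemma sup_span_card (Hm : Submodule (ZMod 2) (F2 n)) (d : F2 n) :
    Nat.card ↥(Hm ⊔ Submodule.span (ZMod 2) ({d} : Set (F2 n))) ≤ 2 * Nat.card ↥Hm := by
  classical
  set H := Hm ⊔ Submodule.span (ZMod 2) ({d} : Set (F2 n)) with hH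
  have key : Nat.card ↥H ≤ Nat.card (↥Hm × ZMod 2) := by
    apply Nat.card_le_card_of_surjective
      (f := fun p : ↥Hm × ZMod 2 =>
        (⟨p.1.1 + p.2 • d,
          add_mem (Submodule.mem_sup_left p.1.2)
            (Submodule.mem_sup_right
              (Submodule.smul_mem _ _ (Submodule.mem_span_singleton_self d)))⟩ : ↥H))
    rintro ⟨y, hy⟩
    rw [hH, Submodule.mem_sup] at hy
    obtain ⟨v, hv, z, hz, hvz⟩ := hy
    obtain ⟨c, rfl⟩ := Submodule.mem_span_singleton.1 hz
    exact ⟨⟨⟨v, hv⟩, c⟩, Subtype.ext hvz⟩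
  rw [Nat.card_prod, nat_card_zmod2, mul_comm] at key
  exact key

lemma mem_vadd_coset (H : Submodule (ZMod 2) (F2 n)) {t x : F2 n} (h : t + x ∈ H) :
    x ∈ t +ᵥ (H : Set (F2 n)) :=
  ⟨t + x, h, by show t +ᵥ (t + x) = x; rw [vadd_eq_add]; exact addCancel t x⟩

set_option maxHeartbeats 3000000 in
lemma cover_of_small_doubling (K : ℝ) (hK1 : 1 ≤ K) (hK2 : K < 9 / 5)
    (S : Finset (F2 n)) (h0S : (0 : F2 n) ∈ S)
    (hdbl : ((S + S).card : ℝ) ≤ K * S.card) :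
    ∃ (H : Submodule (ZMod 2) (F2 n)) (t₁ t₂ t₃ : F2 n),
      Nat.card H ≤ S.card ∧
      (↑S : Set (F2 n)) ⊆
        (t₁ +ᵥ (H : Set (F2 n))) ∪ (t₂ +ᵥ (H : Set (F2 n))) ∪ (t₃ +ᵥ (H : Set (F2 n))) := by
  classical
  have hSne : S.Nonempty := ⟨0, h0S⟩
  have hs1 : 1 ≤ S.card := Finset.card_pos.2 hSne
  have hsR : (1 : ℝ) ≤ (S.card : ℝ) := by exact_mod_cast hs1
  set P := Submodule.span (ZMod 2) (↑S : Set (F2 n)) with hPdef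
  have hPfin : (↑P : Set (F2 n)).Finite := Set.toFinite _
  set G : Finset (F2 n) := hPfin.toFinset with hGdef
  have hmemG : ∀ x : F2 n, x ∈ G ↔ x ∈ P := fun x => Set.Finite.mem_toFinset _
  have hSG : S ⊆ G := fun x hx => (hmemG x).2 (Submodule.subset_span hx)
  have h0G : (0 : F2 n) ∈ G := (hmemG 0).2 (zero_mem _)
  have hGcl : ∀ x ∈ G, ∀ y ∈ G, x + y ∈ G := fun x hx y hy =>
    (hmemG _).2 (add_mem ((hmemG x).1 hx) ((hmemG y).1 hy))
  have hGcardP : Nat.card ↥P = G.card := by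
    rw [← SetLike.coe_sort_coe, Nat.card_coe_set_eq, Set.ncard_eq_toFinset_card _ hPfin]
  have hsub_addS : ∀ X : Finset (F2 n), X ⊆ X + S := fun X x hx =>
    Finset.mem_add.2 ⟨x, hx, 0, h0S, add_zero x⟩
  have hXSsubG : ∀ X : Finset (F2 n), X ⊆ G → X + S ⊆ G := by
    intro X hX x hx
    rw [Finset.mem_add] at hx
    obtain ⟨y, hy, z, hz, rfl⟩ := hx
    exact hGcl _ (hX hy) _ (hSG hz)
  by_cases hTG : S + S = G
  · -- span equals S+S
    have hGle : (G.card : ℝ) ≤ K * S.card := by rw [← hTG]; exact hdbl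
    by_cases hle : G.card ≤ S.card
    · refine ⟨P, 0, 0, 0, by rw [hGcardP]; exact hle, ?_⟩
      intro x hx
      rw [Finset.mem_coe] at hx
      left; left
      exact mem_vadd_coset P (by rw [zero_add]; exact Submodule.subset_span hx)
    · push_neg at hle
      have h2 : 1 < G.card := lt_of_le_of_lt hs1 hle
      obtain ⟨g, hgG, hgne⟩ := Finset.exists_mem_ne h2 0
      have hgP : g ∈ P := (hmemG g).1 hgG
      obtain ⟨i, hgi⟩ : ∃ i, g i = 1 := by
        by_contra hcon
        push_neg at hcon
        refine hgne (funext fun i => ?_)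
        rcases z2 (g i) with h | h
        · exact h
        · exact absurd h (hcon i)
      obtain ⟨hWP, hWmem, hWcard⟩ := (half_subgroup P hgP hgi).choose_spec
      set W := (half_subgroup P hgP hgi).choose with hWdef
      refine ⟨W, 0, g, 0, ?_, ?_⟩
      · have h1 : ((2 * Nat.card ↥W : ℕ) : ℝ) ≤ (G.card : ℝ) := by
          rw [← hGcardP]; exact_mod_cast hWcard
        have h2' : (G.card : ℝ) < 2 * S.card := lt_of_le_of_lt hGle (by nlinarith)
        have : ((Nat.card ↥W : ℕ) : ℝ) < (S.card : ℝ) := by push_cast at h1 ⊢; linarith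
        exact_mod_cast this.le
      · intro x hx
        rw [Finset.mem_coe] at hx
        have hxP : x ∈ P := Submodule.subset_span hx
        rcases z2 (x i) with h0 | h1
        · left; left
          exact mem_vadd_coset W (by rw [zero_add]; exact hWmem x hxP h0)
        · left; right
          refine mem_vadd_coset W (hWmem _ (add_mem hgP hxP) ?_)
          have : (1 : ZMod 2) + 1 = 0 := by decide
          simpa [Pi.add_apply, hgi, h1] using this
  · -- atom machinery
    set Fam : Finset (Finset (F2 n)) :=
      G.powerset.filter (fun X => X.Nonempty ∧ X + S ≠ G) with hFamdef
    have hmemFam : ∀ X : Finset (F2 n), X ∈ Fam ↔ X ⊆ G ∧ X.Nonempty ∧ X + S ≠ G := by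
      intro X
      simp [hFamdef, Finset.mem_filter, Finset.mem_powerset, and_assoc]
    have hSFam : S ∈ Fam := (hmemFam S).2 ⟨hSG, hSne, hTG⟩
    set f : Finset (F2 n) → ℤ := fun X => ((X + S).card : ℤ) - X.card with hfdef
    have hfapp : ∀ X : Finset (F2 n), f X = ((X + S).card : ℤ) - X.card := fun _ => rfl
    have hfims : (Fam.image f).Nonempty := ⟨f S, Finset.mem_image_of_mem f hSFam⟩
    set κ : ℤ := (Fam.image f).min' hfims with hκdef
    have hκ_le : ∀ X ∈ Fam, κ ≤ f X := fun X hX =>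
      Finset.min'_le _ _ (Finset.mem_image_of_mem f hX)
    have hκS : κ ≤ f S := hκ_le S hSFam
    have hκex : ∃ X ∈ Fam, f X = κ := by
      have h := Finset.min'_mem (Fam.image f) hfims
      rw [Finset.mem_image] at h
      obtain ⟨X, hX, hfX⟩ := h
      exact ⟨X, hX, hfX⟩
    set Frag := Fam.filter (fun X => f X = κ) with hFragdef
    have hmemFrag : ∀ X, X ∈ Frag ↔ X ∈ Fam ∧ f X = κ := fun X => Finset.mem_filter
    have hFragNe : (Frag.image Finset.card).Nonempty := by
      obtain ⟨X, hX, hfX⟩ := hκex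
      exact ⟨X.card, Finset.mem_image_of_mem _ ((hmemFrag X).2 ⟨hX, hfX⟩)⟩
    set μ : ℕ := (Frag.image Finset.card).min' hFragNe with hμdef
    have hμ_le : ∀ X ∈ Frag, μ ≤ X.card := fun X hX =>
      Finset.min'_le _ _ (Finset.mem_image_of_mem _ hX)
    have hμex : ∃ X ∈ Frag, X.card = μ := by
      have h := Finset.min'_mem (Frag.image Finset.card) hFragNe
      rw [Finset.mem_image] at h
      obtain ⟨X, hX, hfX⟩ := h
      exact ⟨X, hX, hfX⟩
    clear_value μ
    clear hμdef
    obtain ⟨M₀, hM₀Frag, hM₀card⟩ := hμex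
    obtain ⟨hM₀Fam, hM₀κ⟩ := (hmemFrag M₀).1 hM₀Frag
    obtain ⟨hM₀G, hM₀ne, hM₀S⟩ := (hmemFam M₀).1 hM₀Fam
    have hμpos : 1 ≤ μ := by
      rw [← hM₀card]
      exact Finset.card_pos.2 hM₀ne
    clear_value Frag
    clear hFragdef
    clear_value κ
    clear hκdef
    clear_value f
    clear hfdef
    -- translation stability
    have hGtr : ∀ g ∈ G, tr g G = G := by
      intro g hg
      ext z
      rw [mem_tr]
      constructor
      · intro h
        have := hGcl _ h _ hg
        rwa [addCancel'] at this
      · intro h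
        exact hGcl _ h _ hg
    have htrF : ∀ g ∈ G, ∀ X ∈ Fam, tr g X ∈ Fam ∧ f (tr g X) = f X := by
      intro g hg X hX
      obtain ⟨hXG, hXne, hXS⟩ := (hmemFam X).1 hX
      have htrG : tr g X ⊆ G := by
        intro z hz
        have h1 : z + g ∈ G := hXG (mem_tr.1 hz)
        have h2 := hGcl _ h1 _ hg
        rwa [addCancel'] at h2
      have hne : (tr g X).Nonempty := by
        obtain ⟨x, hx⟩ := hXne
        exact ⟨x + g, mem_tr.2 (by rwa [addCancel'])⟩
      have hne2 : tr g X + S ≠ G := by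
        rw [tr_add]
        intro hcon
        apply hXS
        have h3 : tr g (tr g (X + S)) = tr g G := by rw [hcon]
        rwa [tr_tr, hGtr g hg] at h3
      refine ⟨(hmemFam _).2 ⟨htrG, hne, hne2⟩, ?_⟩
      rw [hfapp, hfapp, tr_add, card_tr, card_tr]
    -- the band |G| ≥ 2μ + κ
    have hGband : (2 * (μ : ℤ)) + κ ≤ (G.card : ℤ) := by
      have hMSsubG : M₀ + S ⊆ G := hXSsubG M₀ hM₀G
      set X' := G \ (M₀ + S) with hX'def
      have hX'ne : X'.Nonempty := by
        rw [hX'def, Finset.sdiff_nonempty]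
        intro hcon
        exact hM₀S (Finset.Subset.antisymm hMSsubG hcon)
      have hX'G : X' ⊆ G := Finset.sdiff_subset
      have hX'S : X' + S ⊆ G \ M₀ := by
        intro x hx
        rw [Finset.mem_add] at hx
        obtain ⟨y, hy, z, hz, rfl⟩ := hx
        have hyG : y ∈ G := hX'G hy
        have hyN : y ∉ M₀ + S := (Finset.mem_sdiff.1 hy).2
        refine Finset.mem_sdiff.2 ⟨hGcl _ hyG _ (hSG hz), fun hcon => ?_⟩
        exact hyN (Finset.mem_add.2 ⟨y + z, hcon, z, hz, addCancel' z y⟩)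
      have hX'Fam : X' ∈ Fam := by
        refine (hmemFam _).2 ⟨hX'G, hX'ne, fun hcon => ?_⟩
        obtain ⟨x0, hx0⟩ := hM₀ne
        have hx0' : x0 ∈ X' + S := by rw [hcon]; exact hM₀G hx0
        exact (Finset.mem_sdiff.1 (hX'S hx0')).2 hx0
      have hcard1 : (X'.card : ℤ) = (G.card : ℤ) - ((M₀ + S).card : ℤ) := by
        rw [hX'def, Finset.card_sdiff_of_subset hMSsubG]
        push_cast [Finset.card_le_card hMSsubG]
        ring
      have hcard2 : ((X' + S).card : ℤ) ≤ (G.card : ℤ) - (M₀.card : ℤ) := by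
        have hle := Finset.card_le_card hX'S
        rw [Finset.card_sdiff_of_subset hM₀G] at hle
        have := Finset.card_le_card hM₀G
        omega
      have hfX'κ : f X' = κ := by
        have hup : f X' ≤ κ := by
          rw [hfapp, hcard1]
          rw [hfapp] at hM₀κ
          linarith [hcard2, hM₀κ]
        exact le_antisymm hup (hκ_le _ hX'Fam)
      have hμX' : (μ : ℤ) ≤ (X'.card : ℤ) := by
        exact_mod_cast hμ_le _ ((hmemFrag _).2 ⟨hX'Fam, hfX'κ⟩)
      have hMScard : ((M₀ + S).card : ℤ) = (μ : ℤ) + κ := by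
        rw [hfapp] at hM₀κ
        rw [← hM₀card] at *
        push_cast at hM₀κ ⊢
        linarith [hM₀κ]
      rw [hcard1, hMScard] at hμX'
      linarith
    -- submodularity
    have hsubmod : ∀ X Y : Finset (F2 n), f (X ∪ Y) + f (X ∩ Y) ≤ f X + f Y := by
      intro X Y
      have h1 : ((X ∪ Y) + S).card + ((X ∩ Y) + S).card ≤ (X + S).card + (Y + S).card := by
        have e1 : (X ∪ Y) + S = (X + S) ∪ (Y + S) := Finset.union_add
        have e2 : (X ∩ Y) + S ⊆ (X + S) ∩ (Y + S) := Finset.inter_add_subset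
        calc ((X ∪ Y) + S).card + ((X ∩ Y) + S).card
            ≤ ((X + S) ∪ (Y + S)).card + ((X + S) ∩ (Y + S)).card := by
              rw [e1]; exact Nat.add_le_add_left (Finset.card_le_card e2) _
          _ = (X + S).card + (Y + S).card := Finset.card_union_add_card_inter _ _
      have h2 : (X ∪ Y).card + (X ∩ Y).card = X.card + Y.card :=
        Finset.card_union_add_card_inter X Y
      rw [hfapp, hfapp, hfapp, hfapp]
      have h1' : (((X ∪ Y) + S).card : ℤ) + (((X ∩ Y) + S).card : ℤ)
          ≤ ((X + S).card : ℤ) + ((Y + S).card : ℤ) := by exact_mod_cast h1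
      have h2' : ((X ∪ Y).card : ℤ) + ((X ∩ Y).card : ℤ) = (X.card : ℤ) + (Y.card : ℤ) := by
        exact_mod_cast h2
      linarith
    -- atoms intersect → equal
    have hatom : ∀ A₁, A₁ ∈ Frag → A₁.card = μ → ∀ A₂, A₂ ∈ Frag → A₂.card = μ →
        (A₁ ∩ A₂).Nonempty → A₁ = A₂ := by
      intro A₁ hA₁ hc₁ A₂ hA₂ hc₂ hne
      by_contra hne12
      obtain ⟨hA₁Fam, hfA₁⟩ := (hmemFrag _).1 hA₁
      obtain ⟨hA₂Fam, hfA₂⟩ := (hmemFrag _).1 hA₂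
      obtain ⟨hA₁G, hA₁ne, hA₁S⟩ := (hmemFam _).1 hA₁Fam
      obtain ⟨hA₂G, hA₂ne, hA₂S⟩ := (hmemFam _).1 hA₂Fam
      have hCcard : (A₁ ∩ A₂).card < μ := by
        have hle : (A₁ ∩ A₂).card ≤ μ := hc₁ ▸ Finset.card_le_card Finset.inter_subset_left
        rcases lt_or_eq_of_le hle with h | h
        · exact h
        · exfalso
          have hCA₁ : A₁ ∩ A₂ = A₁ :=
            Finset.eq_of_subset_of_card_le Finset.inter_subset_left (by rw [h, hc₁])
          have hsub : A₁ ⊆ A₂ := by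
            rw [← Finset.inter_eq_left]; exact hCA₁
          exact hne12 (Finset.eq_of_subset_of_card_le hsub (by rw [hc₁, hc₂]))
      have hCFam : (A₁ ∩ A₂) ∈ Fam := by
        refine (hmemFam _).2 ⟨Finset.Subset.trans Finset.inter_subset_left hA₁G, hne,
          fun hcon => ?_⟩
        apply hA₁S
        refine Finset.Subset.antisymm (hXSsubG _ hA₁G) ?_
        rw [← hcon]
        exact Finset.add_subset_add_right Finset.inter_subset_left
      have hfC : κ + 1 ≤ f (A₁ ∩ A₂) := by
        rcases lt_or_eq_of_le (hκ_le _ hCFam) with h | h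
        · omega
        · exfalso
          have : μ ≤ (A₁ ∩ A₂).card := hμ_le _ ((hmemFrag _).2 ⟨hCFam, h.symm⟩)
          omega
      have hU := hsubmod A₁ A₂
      rw [hfA₁, hfA₂] at hU
      by_cases hUG : (A₁ ∪ A₂) + S = G
      · have hU1 : f (A₁ ∪ A₂) = (G.card : ℤ) - ((A₁ ∪ A₂).card : ℤ) := by
          rw [hfapp, hUG]
        have hUcard : ((A₁ ∪ A₂).card : ℤ) + ((A₁ ∩ A₂).card : ℤ)
            = (μ : ℤ) + (μ : ℤ) := by
          have := Finset.card_union_add_card_inter A₁ A₂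
          rw [hc₁, hc₂] at this
          exact_mod_cast this
        have hC1 : (1 : ℤ) ≤ ((A₁ ∩ A₂).card : ℤ) := by
          exact_mod_cast Finset.card_pos.2 hne
        linarith
      · have hUFam : (A₁ ∪ A₂) ∈ Fam := by
          refine (hmemFam _).2 ⟨Finset.union_subset hA₁G hA₂G, ?_, hUG⟩
          obtain ⟨x, hx⟩ := hA₁ne
          exact ⟨x, Finset.mem_union_left _ hx⟩
        have := hκ_le _ hUFam
        linarith
    -- build the atom through 0
    obtain ⟨x₁, hx₁⟩ := hM₀ne
    have hx₁G : x₁ ∈ G := hM₀G hx₁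
    obtain ⟨hMFam, hfM⟩ := htrF x₁ hx₁G M₀ hM₀Fam
    set M := tr x₁ M₀ with hMdef
    have hMFrag : M ∈ Frag := (hmemFrag _).2 ⟨hMFam, by rw [hfM]; exact hM₀κ⟩
    have hMcard : M.card = μ := by rw [hMdef, card_tr]; exact hM₀card
    have h0M : (0 : F2 n) ∈ M := mem_tr.2 (by rwa [zero_add])
    obtain ⟨hMG, hMne, hMSneG⟩ := (hmemFam M).1 hMFam
    clear_value M
    clear hMdef
    have hMcl : ∀ x ∈ M, ∀ y ∈ M, x + y ∈ M := by
      intro x hx y hy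
      have hxG : x ∈ G := hMG hx
      obtain ⟨hMxFam, hfMx⟩ := htrF x hxG M hMFam
      have hMxFrag : tr x M ∈ Frag :=
        (hmemFrag _).2 ⟨hMxFam, by rw [hfMx]; exact ((hmemFrag _).1 hMFrag).2⟩
      have heq : tr x M = M := by
        apply hatom (tr x M) hMxFrag (by rw [card_tr]; exact hMcard) M hMFrag hMcard
        exact ⟨x, Finset.mem_inter.2 ⟨mem_tr_self h0M, hx⟩⟩
      have hyx : y + x ∈ tr x M := mem_tr.2 (by rwa [addCancel'])
      rw [heq] at hyx
      rwa [add_comm]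
    set Hm : Submodule (ZMod 2) (F2 n) :=
      { carrier := ↑M
        add_mem' := fun {a b} ha hb => hMcl a ha b hb
        zero_mem' := h0M
        smul_mem' := by
          intro c x hx
          rcases z2 c with rfl | rfl
          · simpa using h0M
          · simpa using hx } with hHmdef
    have hmemHm : ∀ x : F2 n, x ∈ Hm ↔ x ∈ M := fun x => Finset.mem_coe
    have hHmcard : Nat.card ↥Hm = μ := by
      rw [← hMcard]
      have e : Nat.card ↥Hm = Nat.card (↑M : Set (F2 n)) := rfl
      rw [e, Nat.card_coe_set_eq, Set.ncard_coe_finset]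
    clear_value Hm
    clear hHmdef
    set MS := M + S with hMSdef
    have hMSsubG : MS ⊆ G := hXSsubG M hMG
    have hSMS : S ⊆ MS := fun x hx => Finset.mem_add.2 ⟨0, h0M, x, hx, zero_add x⟩
    have hMsubMS : M ⊆ MS := hsub_addS M
    have hMScard : (MS.card : ℤ) = (μ : ℤ) + κ := by
      have hfMκ := ((hmemFrag _).1 hMFrag).2
      rw [hfapp, hMcard] at hfMκ
      linarith
    have hcosetMS : ∀ c ∈ MS, tr c M ⊆ MS := by
      intro c hc z hz
      have hzc : z + c ∈ M := mem_tr.1 hz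
      rw [hMSdef, Finset.mem_add] at hc
      obtain ⟨m', hm', s', hs', rfl⟩ := hc
      have hzm : (z + (m' + s')) + m' ∈ M := hMcl _ hzc _ hm'
      rw [hMSdef]
      refine Finset.mem_add.2 ⟨(z + (m' + s')) + m', hzm, s', hs', ?_⟩
      have e : z + (m' + s') + m' + s' = z + ((m' + s') + (m' + s')) := by abel
      rw [e, addSelf, add_zero]
    clear_value MS
    clear hMSdef
    have hκR : (κ : ℝ) ≤ ((S + S).card : ℝ) - S.card := by
      rw [hfapp] at hκS
      exact_mod_cast hκS
    have hsMS : (S.card : ℝ) ≤ (MS.card : ℝ) := by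
      exact_mod_cast Finset.card_le_card hSMS
    have hMScardR : (MS.card : ℝ) = (μ : ℝ) + (κ : ℝ) := by exact_mod_cast hMScard
    have hcov : ∀ c x : F2 n, x ∈ tr c M → x ∈ c +ᵥ (Hm : Set (F2 n)) := by
      intro c x hx
      refine mem_vadd_coset Hm ((hmemHm _).2 ?_)
      have h := mem_tr.1 hx
      rwa [add_comm] at h
    by_cases h1 : MS ⊆ tr 0 M
    · exfalso
      rw [tr_zero] at h1
      have hSM : S ⊆ M := Finset.Subset.trans hSMS h1
      have hPH : P ≤ Hm := by
        rw [hPdef]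
        apply Submodule.span_le.2
        intro x hx
        exact (hmemHm x).2 (hSM (Finset.mem_coe.1 hx))
      have hGM : G ⊆ M := fun x hx => (hmemHm x).1 (hPH ((hmemG x).1 hx))
      exact hMSneG (Finset.Subset.antisymm hMSsubG (Finset.Subset.trans hGM hMsubMS))
    obtain ⟨c₂, hc₂MS, hc₂n⟩ := Finset.not_subset.1 h1
    have hC1 : tr 0 M = M := tr_zero M
    have hd2 : Disjoint (tr c₂ M) (tr 0 M) := disj_tr h0M hMcl hc₂n
    have hcard2 : ((tr 0 M) ∪ (tr c₂ M)).card = μ + μ := by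
      rw [Finset.card_union_of_disjoint hd2.symm, card_tr 0 M, card_tr c₂ M, hMcard]
    have hU2sub : (tr 0 M) ∪ (tr c₂ M) ⊆ MS :=
      Finset.union_subset (by rw [hC1]; exact hMsubMS) (hcosetMS c₂ hc₂MS)
    have h2μ : 2 * (μ : ℤ) ≤ (μ : ℤ) + κ := by
      have hle := Finset.card_le_card hU2sub
      rw [hcard2] at hle
      have hle' : ((μ + μ : ℕ) : ℤ) ≤ (MS.card : ℤ) := by exact_mod_cast hle
      push_cast at hle'
      linarith
    have hμs : μ ≤ S.card := by
      have hμκ : (μ : ℝ) ≤ (κ : ℝ) := by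
        have h : (μ : ℤ) ≤ κ := by linarith
        exact_mod_cast h
      have hlt : (μ : ℝ) < (S.card : ℝ) := by nlinarith [hdbl, hsR]
      exact_mod_cast hlt.le
    by_cases h2 : MS ⊆ (tr 0 M) ∪ (tr c₂ M)
    · refine ⟨Hm, 0, c₂, 0, by rw [hHmcard]; exact hμs, ?_⟩
      intro x hx
      rw [Finset.mem_coe] at hx
      rcases Finset.mem_union.1 (h2 (hSMS hx)) with hx1 | hx2
      · left; left; exact hcov 0 x hx1
      · left; right; exact hcov c₂ x hx2
    obtain ⟨c₃, hc₃MS, hc₃n⟩ := Finset.not_subset.1 h2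
    have hd3 : Disjoint (tr c₃ M) ((tr 0 M) ∪ (tr c₂ M)) :=
      Finset.disjoint_union_right.2
        ⟨disj_tr h0M hMcl (fun h => hc₃n (Finset.mem_union_left _ h)),
         disj_tr h0M hMcl (fun h => hc₃n (Finset.mem_union_right _ h))⟩
    have hcard3 : ((tr 0 M) ∪ (tr c₂ M) ∪ (tr c₃ M)).card = μ + μ + μ := by
      rw [Finset.card_union_of_disjoint hd3.symm, hcard2, card_tr c₃ M, hMcard]
    have hU3sub : (tr 0 M) ∪ (tr c₂ M) ∪ (tr c₃ M) ⊆ MS :=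
      Finset.union_subset hU2sub (hcosetMS c₃ hc₃MS)
    by_cases h3 : MS ⊆ (tr 0 M) ∪ (tr c₂ M) ∪ (tr c₃ M)
    · refine ⟨Hm, 0, c₂, c₃, by rw [hHmcard]; exact hμs, ?_⟩
      intro x hx
      rw [Finset.mem_coe] at hx
      rcases Finset.mem_union.1 (h3 (hSMS hx)) with hx12 | hx3
      · rcases Finset.mem_union.1 hx12 with hx1 | hx2
        · left; left; exact hcov 0 x hx1
        · left; right; exact hcov c₂ x hx2
      · right; exact hcov c₃ x hx3
    obtain ⟨c₄, hc₄MS, hc₄n⟩ := Finset.not_subset.1 h3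
    have hd4 : Disjoint (tr c₄ M) ((tr 0 M) ∪ (tr c₂ M) ∪ (tr c₃ M)) := by
      refine Finset.disjoint_union_right.2 ⟨Finset.disjoint_union_right.2 ⟨?_, ?_⟩, ?_⟩ <;>
        refine disj_tr h0M hMcl (fun h => hc₄n ?_)
      · exact Finset.mem_union_left _ (Finset.mem_union_left _ h)
      · exact Finset.mem_union_left _ (Finset.mem_union_right _ h)
      · exact Finset.mem_union_right _ h
    have hcard4 : ((tr 0 M) ∪ (tr c₂ M) ∪ (tr c₃ M) ∪ (tr c₄ M)).card = μ + μ + μ + μ := by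
      rw [Finset.card_union_of_disjoint hd4.symm, hcard3, card_tr c₄ M, hMcard]
    have hU4sub : (tr 0 M) ∪ (tr c₂ M) ∪ (tr c₃ M) ∪ (tr c₄ M) ⊆ MS :=
      Finset.union_subset hU3sub (hcosetMS c₄ hc₄MS)
    have h4μ : 4 * (μ : ℤ) ≤ (μ : ℤ) + κ := by
      have hle := Finset.card_le_card hU4sub
      rw [hcard4] at hle
      have hle' : ((μ + μ + μ + μ : ℕ) : ℤ) ≤ (MS.card : ℤ) := by exact_mod_cast hle
      push_cast at hle'
      linarith
    by_cases h4 : MS ⊆ (tr 0 M) ∪ (tr c₂ M) ∪ (tr c₃ M) ∪ (tr c₄ M)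
    · -- four cosets: merge the cosets of 0 and c₂
      have h3μκ : (3 : ℝ) * (μ : ℝ) ≤ (κ : ℝ) := by
        have h : 3 * (μ : ℤ) ≤ κ := by linarith
        exact_mod_cast h
      have h2μs : 2 * μ ≤ S.card := by
        have hμ0 : (0 : ℝ) ≤ (μ : ℝ) := by positivity
        have hlt : ((2 * μ : ℕ) : ℝ) < (S.card : ℝ) := by
          push_cast
          nlinarith [hdbl, hsR, hκR]
        exact_mod_cast hlt.le
      set H := Hm ⊔ Submodule.span (ZMod 2) ({c₂} : Set (F2 n)) with hHdef
      have hHcard : Nat.card ↥H ≤ 2 * μ := by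
        have h := sup_span_card Hm c₂
        rwa [hHmcard, ← hHdef] at h
      have hMH : ∀ x ∈ M, x ∈ H := fun x hx =>
        Submodule.mem_sup_left ((hmemHm x).2 hx)
      have hc₂H : c₂ ∈ H :=
        Submodule.mem_sup_right (Submodule.mem_span_singleton_self c₂)
      refine ⟨H, 0, c₃, c₄, le_trans hHcard h2μs, ?_⟩
      intro x hx
      rw [Finset.mem_coe] at hx
      rcases Finset.mem_union.1 (h4 (hSMS hx)) with hx123 | hx4
      · rcases Finset.mem_union.1 hx123 with hx12 | hx3
        · rcases Finset.mem_union.1 hx12 with hx1 | hx2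
          · left; left
            refine mem_vadd_coset H ?_
            rw [zero_add]
            exact hMH x (by rwa [tr_zero] at hx1)
          · left; left
            refine mem_vadd_coset H ?_
            rw [zero_add]
            have h := mem_tr.1 hx2
            have h' : (x + c₂) + c₂ ∈ H := add_mem (hMH _ h) hc₂H
            rwa [addCancel'] at h'
        · left; right
          refine mem_vadd_coset H ?_
          have h := mem_tr.1 hx3
          rw [add_comm] at h
          exact hMH _ h
      · right
        refine mem_vadd_coset H ?_
        have h := mem_tr.1 hx4
        rw [add_comm] at h
        exact hMH _ h
    · -- a fifth coset would make the doubling too large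
      exfalso
      obtain ⟨c₅, hc₅MS, hc₅n⟩ := Finset.not_subset.1 h4
      have hd5 : Disjoint (tr c₅ M) ((tr 0 M) ∪ (tr c₂ M) ∪ (tr c₃ M) ∪ (tr c₄ M)) := by
        refine Finset.disjoint_union_right.2
          ⟨Finset.disjoint_union_right.2 ⟨Finset.disjoint_union_right.2 ⟨?_, ?_⟩, ?_⟩, ?_⟩ <;>
          refine disj_tr h0M hMcl (fun h => hc₅n ?_)
        · exact Finset.mem_union_left _ (Finset.mem_union_left _ (Finset.mem_union_left _ h))
        · exact Finset.mem_union_left _ (Finset.mem_union_left _ (Finset.mem_union_right _ h))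
        · exact Finset.mem_union_left _ (Finset.mem_union_right _ h)
        · exact Finset.mem_union_right _ h
      have hcard5 : ((tr 0 M) ∪ (tr c₂ M) ∪ (tr c₃ M) ∪ (tr c₄ M) ∪ (tr c₅ M)).card
          = μ + μ + μ + μ + μ := by
        rw [Finset.card_union_of_disjoint hd5.symm, hcard4, card_tr c₅ M, hMcard]
      have hU5sub : (tr 0 M) ∪ (tr c₂ M) ∪ (tr c₃ M) ∪ (tr c₄ M) ∪ (tr c₅ M) ⊆ MS :=
        Finset.union_subset hU4sub (hcosetMS c₅ hc₅MS)
      have h5μ : 5 * (μ : ℤ) ≤ (μ : ℤ) + κ := by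
        have hle := Finset.card_le_card hU5sub
        rw [hcard5] at hle
        have hle' : ((μ + μ + μ + μ + μ : ℕ) : ℤ) ≤ (MS.card : ℤ) := by exact_mod_cast hle
        push_cast at hle'
        linarith
      have h4μκ : (4 : ℝ) * (μ : ℝ) ≤ (κ : ℝ) := by
        have h : 4 * (μ : ℤ) ≤ κ := by linarith
        exact_mod_cast h
      have hposs : (0 : ℝ) < (S.card : ℝ) := by linarith
      have hkey : (0 : ℝ) < (9 - 5 * K) * (S.card : ℝ) :=
        mul_pos (by linarith) hposs
      nlinarith [hsMS, hMScardR, hκR, hdbl]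

end GKAux

/-- `G(K) ≤ 3` for `1 ≤ K < 9/5` (Proposition 6.3): if `|A+A| ≤ K|A|` then `A`
is covered by three translates of a linear subspace of cardinality at most `|A|`. -/


theorem G_small_K_second_range {n : ℕ} (K : ℝ) (hK1 : 1 ≤ K) (hK2 : K < 9 / 5)
    (A : Finset (F2 n)) (hA : A.Nonempty)
    (hdouble : ((A + A).card : ℝ) ≤ K * A.card) :
    ∃ (H : Submodule (ZMod 2) (F2 n)) (t₁ t₂ t₃ : F2 n),
      Nat.card H ≤ A.card ∧
      (↑A : Set (F2 n)) ⊆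
        (t₁ +ᵥ (H : Set (F2 n))) ∪ (t₂ +ᵥ (H : Set (F2 n))) ∪ (t₃ +ᵥ (H : Set (F2 n))) := by
  classical
  obtain ⟨a₀, ha₀⟩ := hA
  have h0S : (0 : F2 n) ∈ GKAux.tr a₀ A := GKAux.mem_tr.2 (by rwa [zero_add])
  have hScard : (GKAux.tr a₀ A).card = A.card := GKAux.card_tr a₀ A
  have hSS : GKAux.tr a₀ A + GKAux.tr a₀ A = A + A := by
    rw [GKAux.tr_add a₀ A (GKAux.tr a₀ A), add_comm A (GKAux.tr a₀ A), GKAux.tr_add a₀ A A,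
      GKAux.tr_tr]
  obtain ⟨H, t₁, t₂, t₃, hcard, hcov⟩ :=
    GKAux.cover_of_small_doubling K hK1 hK2 (GKAux.tr a₀ A) h0S
      (by rw [hSS, hScard]; exact hdouble)
  refine ⟨H, t₁ + a₀, t₂ + a₀, t₃ + a₀, by rwa [hScard] at hcard, ?_⟩
  intro x hx
  rw [Finset.mem_coe] at hx
  have hxS : x + a₀ ∈ GKAux.tr a₀ A := GKAux.mem_tr.2 (by rwa [GKAux.addCancel'])
  have hpush : ∀ t : F2 n, (x + a₀) ∈ t +ᵥ (H : Set (F2 n)) →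
      x ∈ (t + a₀) +ᵥ (H : Set (F2 n)) := by
    intro t ht
    obtain ⟨y, hy, hyy⟩ := ht
    have hyy' : t + y = x + a₀ := hyy
    refine ⟨y, hy, ?_⟩
    show (t + a₀) + y = x
    rw [add_right_comm, hyy', GKAux.addCancel']
  rcases hcov (Finset.mem_coe.2 hxS) with (h | h) | h
  · left; left; exact hpush t₁ h
  · left; right; exact hpush t₂ h
  · right; exact hpush t₃ h
end
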